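/- arXiv:1512.06369 — 9 statements merged into one kernel-verified Lean document; each statement's English description precedes it below -/
import Mathlib

section
/- Let G be a Polish group acting continuously on a Polish space X. For open nonempty V₀, V₁ ⊆ G and x₀, x₁ ∈ X, if (x₀,V₀) ≤₂ (x₁,V₁) then the closure of V₀·x₀ is contained in the closure of V₁·x₁ (i.e., (x₀,V₀) ≤₁ (x₁,V₁)). -/
open Set

variable {G X : Type*}

open Classical in
/-- Hjorth's relation `(x₀,V₀) ≤_α (x₁,V₁)`. -/
noncomputable def HLe [Group G] [TopologicalSpace G] [TopologicalSpace X] [MulAction G X]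
    (α : Ordinal) (x₀ : X) (V₀ : Set G) (x₁ : X) (V₁ : Set G) : Prop :=
  if α ≤ 1 then
    closure ((· • x₀) '' V₀) ⊆ closure ((· • x₁) '' V₁)
  else if h : ∃ β, α = β + 1 then
    ∀ W₀ : Set G, IsOpen W₀ → W₀.Nonempty → W₀ ⊆ V₀ →
      ∃ W₁ : Set G, IsOpen W₁ ∧ W₁.Nonempty ∧ W₁ ⊆ V₁ ∧ HLe h.choose x₁ W₁ x₀ W₀
  else
    ∀ β, 1 ≤ β → β < α → HLe β x₀ V₀ x₁ V₁
termination_by α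
decreasing_by
  · conv_rhs => rw [h.choose_spec]
    exact lt_of_lt_of_le (Order.lt_succ _) (le_of_eq (Ordinal.add_one_eq_succ _).symm)
  · assumption

open Classical in
/-- Level `α` of the `Π⁰` Borel hierarchy (`Π⁰_1` = closed sets). -/
noncomputable def Pi0 {Y : Type*} [TopologicalSpace Y] (α : Ordinal) : Set (Set Y) :=
  if α ≤ 1 then {A | IsClosed A}
  else {A | ∃ f : ℕ → Set Y,
        (∀ n, ∃ β, ∃ _ : 1 ≤ β, ∃ _ : β < α, f n ∈ Pi0 β) ∧ A = ⋂ n, (f n)ᶜ}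
termination_by α
decreasing_by assumption

/-- The Vaught transform `A^{*W}`. -/
def vaughtStar [Group G] [TopologicalSpace G] [MulAction G X]
    (A : Set X) (W : Set G) : Set X :=
  {x | IsMeagre (W \ {g : G | g • x ∈ A})}

/-- Hjorth's equivalence relation `x ≡_α y`. -/
def HEquiv [Group G] [TopologicalSpace G] [TopologicalSpace X] [MulAction G X]
    (α : Ordinal) (x y : X) : Prop :=
  (∀ V : Set G, IsOpen V → V.Nonempty →
      ∃ W : Set G, IsOpen W ∧ W.Nonempty ∧ HLe α y W x V) ∧
  (∀ V : Set G, IsOpen V → V.Nonempty →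
      ∃ W : Set G, IsOpen W ∧ W.Nonempty ∧ HLe α x W y V)

/-- The Hjorth rank `δ(x)`, relative to a countable basis `B₀`. -/
noncomputable def hjorthRank [Group G] [TopologicalSpace G] [TopologicalSpace X] [MulAction G X]
    (B₀ : Set (Set G)) (x : X) : Ordinal :=
  sInf {α | ∀ V₀ ∈ B₀, ∀ V₁ ∈ B₀, ∀ W₀ ∈ B₀, ∀ W₁ ∈ B₀,
    closure W₀ ⊆ V₀ → closure V₁ ⊆ W₁ →
    HLe α x V₀ x V₁ → HLe (α + 1) x W₀ x W₁}

lemma HLe_one_iff [Group G] [TopologicalSpace G] [TopologicalSpace X] [MulAction G X]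
    (y z : X) (A B : Set G) :
    HLe 1 y A z B ↔ closure ((· • y) '' A) ⊆ closure ((· • z) '' B) := by
  rw [HLe, if_pos le_rfl]

theorem stmt0 [Group G] [TopologicalSpace G] [IsTopologicalGroup G] [PolishSpace G]
    [TopologicalSpace X] [PolishSpace X] [MulAction G X] [ContinuousSMul G X]
    (x₀ x₁ : X) (V₀ V₁ : Set G)
    (hV₀ : IsOpen V₀) (hV₀ne : V₀.Nonempty) (hV₁ : IsOpen V₁) (hV₁ne : V₁.Nonempty)
    (h : HLe 2 x₀ V₀ x₁ V₁) :
    HLe 1 x₀ V₀ x₁ V₁ := by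
  have hreg : RegularSpace X := by
    letI := TopologicalSpace.upgradeIsCompletelyMetrizable X
    exact inferInstance
  have h21 : (2 : Ordinal) = 1 + 1 := one_add_one_eq_two.symm
  have h2 : ¬ (2 : Ordinal) ≤ 1 := by
    rw [h21]
    exact not_le.mpr (lt_add_one 1)
  have hex : ∃ β : Ordinal, 2 = β + 1 := ⟨1, h21⟩
  rw [HLe, if_neg h2, dif_pos hex] at h
  have hc : hex.choose = 1 := by
    have h1 : hex.choose + 1 = 1 + 1 := by
      rw [← hex.choose_spec, h21]
    rwa [Ordinal.add_one_eq_succ, Ordinal.add_one_eq_succ, Order.succ_eq_succ_iff] at h1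
  rw [hc] at h
  rw [HLe_one_iff]
  apply closure_minimal _ isClosed_closure
  rintro p ⟨g, hg, rfl⟩
  rw [mem_closure_iff]
  intro U hU hpU
  obtain ⟨U', hU'mem, hU'cl, hU'sub⟩ := exists_mem_nhds_isClosed_subset (hU.mem_nhds hpU)
  obtain ⟨U'', hU''sub, hU''o, hgx⟩ := mem_nhds_iff.mp hU'mem
  have hcont : Continuous fun g : G => g • x₀ := continuous_id.smul continuous_const
  set W₀ : Set G := V₀ ∩ (fun g : G => g • x₀) ⁻¹' U'' with hW₀def
  have hW₀o : IsOpen W₀ := hV₀.inter (hU''o.preimage hcont)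
  have hW₀ne : W₀.Nonempty := ⟨g, hg, hgx⟩
  obtain ⟨W₁, hW₁o, hW₁ne, hW₁sub, hW₁le⟩ := h W₀ hW₀o hW₀ne inter_subset_left
  replace hW₁le : HLe 1 x₁ W₁ x₀ W₀ := hW₁le
  rw [HLe_one_iff] at hW₁le
  obtain ⟨g₁, hg₁⟩ := hW₁ne
  have hmem : g₁ • x₁ ∈ closure ((· • x₀) '' W₀) :=
    hW₁le (subset_closure ⟨g₁, hg₁, rfl⟩)
  have himg : (· • x₀) '' W₀ ⊆ U' := by
    rintro q ⟨g', hg', rfl⟩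
    exact hU''sub hg'.2
  have : g₁ • x₁ ∈ U := hU'sub (((closure_mono himg).trans
    (le_of_eq hU'cl.closure_eq)) hmem)
  exact ⟨g₁ • x₁, this, ⟨g₁, hW₁sub hg₁, rfl⟩⟩
end

section
/- For every countable ordinal α ≥ 1, every g ∈ G, every x₀ ∈ X and every open nonempty V₀ ⊆ G: (x₀,V₀) ≤_α (g·x₀, V₀·g⁻¹). -/
open Set

variable {G X : Type*}

lemma image_smul_eq [Group G] [MulAction G X] (g : G) (x₀ : X) (V : Set G) :
    (· • (g • x₀)) '' ((· * g⁻¹) '' V) = (· • x₀) '' V := by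
  rw [Set.image_image]
  apply Set.image_congr
  intro v _
  rw [smul_smul, inv_mul_cancel_right]

lemma key_aux [Group G] [TopologicalSpace G] [IsTopologicalGroup G]
    [TopologicalSpace X] [MulAction G X] :
    ∀ α : Ordinal, ∀ g : G, ∀ x₀ : X, ∀ V₀ : Set G, IsOpen V₀ → V₀.Nonempty →
      HLe α x₀ V₀ (g • x₀) ((· * g⁻¹) '' V₀) := by
  intro α
  induction α using Ordinal.induction with
  | h α IH =>
    intro g x₀ V₀ hV₀ hV₀ne
    rw [HLe]
    split_ifs with h1 h2
    · rw [image_smul_eq]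
    · -- successor case
      intro W₀ hW₀ hW₀ne hW₀sub
      refine ⟨(· * g⁻¹) '' W₀, (Homeomorph.mulRight g⁻¹).isOpenMap _ hW₀,
        hW₀ne.image _, Set.image_mono hW₀sub, ?_⟩
      have hlt : h2.choose < α := by
        conv_rhs => rw [h2.choose_spec]
        rw [Ordinal.add_one_eq_succ]
        exact Order.lt_succ _
      have := IH h2.choose hlt g⁻¹ (g • x₀) ((· * g⁻¹) '' W₀)
        ((Homeomorph.mulRight g⁻¹).isOpenMap _ hW₀) (hW₀ne.image _)
      rw [inv_smul_smul] at this
      have heq : (· * g⁻¹⁻¹) '' ((· * g⁻¹) '' W₀) = W₀ := by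
        rw [Set.image_image]
        simp
      rw [heq] at this
      exact this
    · intro β _ hβ
      exact IH β hβ g x₀ V₀ hV₀ hV₀ne

theorem stmt5 [Group G] [TopologicalSpace G] [IsTopologicalGroup G] [PolishSpace G]
    [TopologicalSpace X] [PolishSpace X] [MulAction G X] [ContinuousSMul G X]
    (α : Ordinal) (hα1 : 1 ≤ α) (hα : α < (Cardinal.aleph 1).ord)
    (g : G) (x₀ : X) (V₀ : Set G) (hV₀ : IsOpen V₀) (hV₀ne : V₀.Nonempty) :
    HLe α x₀ V₀ (g • x₀) ((· * g⁻¹) '' V₀) := key_aux α g x₀ V₀ hV₀ hV₀ne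
end

section
/- Define x₀ ≡_α x₁ iff for each i ∈ {0,1} and each open nonempty V_i ⊆ G there is an open nonempty V_{1-i} ⊆ G with (x_{1-i}, V_{1-i}) ≤_α (x_i, V_i). Then ≡_α is an equivalence relation on X which is invariant under the action of G: for all g ∈ G and x ∈ X, x ≡_α g·x. -/
open Set

variable {G X : Type*}

section Aux

variable [Group G] [TopologicalSpace G] [IsTopologicalGroup G]
    [TopologicalSpace X] [MulAction G X]

private lemma choose_lt {α : Ordinal} (h : ∃ β, α = β + 1) : h.choose < α := by
  conv_rhs => rw [h.choose_spec, Ordinal.add_one_eq_succ]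
  exact Order.lt_succ _

lemma HLe_refl (α : Ordinal) (x : X) (V : Set G) : HLe α x V x V := by
  induction α using Ordinal.induction generalizing V with
  | _ α ih =>
    rw [HLe]
    split
    · exact subset_rfl
    · split
      · rename_i h
        intro W₀ hW₀o hW₀n hW₀s
        exact ⟨W₀, hW₀o, hW₀n, hW₀s, ih _ (choose_lt h) W₀⟩
      · intro β _ hβα
        exact ih β hβα V

lemma HLe_trans (α : Ordinal) {x₀ x₁ x₂ : X} {V₀ V₁ V₂ : Set G}
    (h01 : HLe α x₀ V₀ x₁ V₁) (h12 : HLe α x₁ V₁ x₂ V₂) : HLe α x₀ V₀ x₂ V₂ := by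
  induction α using Ordinal.induction generalizing x₀ x₁ x₂ V₀ V₁ V₂ with
  | _ α ih =>
    rw [HLe] at h01 h12 ⊢
    by_cases hle : α ≤ 1
    · rw [if_pos hle] at h01 h12 ⊢
      exact h01.trans h12
    · rw [if_neg hle] at h01 h12 ⊢
      by_cases h : ∃ β, α = β + 1
      · rw [dif_pos h] at h01 h12 ⊢
        intro W₀ hW₀o hW₀n hW₀s
        obtain ⟨W₁, hW₁o, hW₁n, hW₁s, hW₁⟩ := h01 W₀ hW₀o hW₀n hW₀s
        obtain ⟨W₂, hW₂o, hW₂n, hW₂s, hW₂⟩ := h12 W₁ hW₁o hW₁n hW₁s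
        exact ⟨W₂, hW₂o, hW₂n, hW₂s, ih _ (choose_lt h) hW₂ hW₁⟩
      · rw [dif_neg h] at h01 h12 ⊢
        intro β hβ1 hβα
        exact ih β hβα (h01 β hβ1 hβα) (h12 β hβ1 hβα)

private lemma smul_image_eq [ContinuousSMul G X] (g : G) (x : X) (V : Set G) :
    (· • (g • x)) '' ((· * g) ⁻¹' V) = (· • x) '' V := by
  ext y
  constructor
  · rintro ⟨h, hh, rfl⟩
    exact ⟨h * g, hh, by simp [mul_smul]⟩
  · rintro ⟨k, hk, rfl⟩
    exact ⟨k * g⁻¹, by simpa using hk, by simp [smul_smul]⟩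

private lemma preimage_mul_mul_inv (g : G) (W : Set G) :
    (· * g⁻¹) ⁻¹' ((· * g) ⁻¹' W) = W := by
  ext h; simp

lemma HLe_smul [ContinuousSMul G X] (α : Ordinal) (g : G) (x : X) (V : Set G) :
    HLe α x V (g • x) ((· * g) ⁻¹' V) := by
  induction α using Ordinal.induction generalizing g x V with
  | _ α ih =>
    rw [HLe]
    split
    · rw [smul_image_eq]
    · split
      · rename_i h
        intro W₀ hW₀o hW₀n hW₀s
        refine ⟨(· * g) ⁻¹' W₀, hW₀o.preimage (continuous_mul_right g), ?_,
          fun a ha => hW₀s ha, ?_⟩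
        · obtain ⟨w, hw⟩ := hW₀n
          exact ⟨w * g⁻¹, by simpa using hw⟩
        · have := ih _ (choose_lt h) g⁻¹ (g • x) ((· * g) ⁻¹' W₀)
          rwa [inv_smul_smul, preimage_mul_mul_inv] at this
      · intro β _ hβα
        exact ih β hβα g x V

lemma HLe_smul' [ContinuousSMul G X] (α : Ordinal) (g : G) (x : X) (V : Set G) :
    HLe α (g • x) ((· * g) ⁻¹' V) x V := by
  have := HLe_smul (X := X) α g⁻¹ (g • x) ((· * g) ⁻¹' V)
  rwa [inv_smul_smul, preimage_mul_mul_inv] at this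

end Aux

theorem stmt6 [Group G] [TopologicalSpace G] [IsTopologicalGroup G] [PolishSpace G]
    [TopologicalSpace X] [PolishSpace X] [MulAction G X] [ContinuousSMul G X]
    (α : Ordinal) (hα1 : 1 ≤ α) (hα : α < (Cardinal.aleph 1).ord) :
    Equivalence (HEquiv (G := G) (X := X) α) ∧
      ∀ (g : G) (x : X), HEquiv (G := G) α x (g • x) := by
  constructor
  · refine ⟨fun x => ?_, fun {x y} h => ⟨h.2, h.1⟩, fun {x y z} hxy hyz => ?_⟩
    · exact ⟨fun V hVo hVn => ⟨V, hVo, hVn, HLe_refl α x V⟩,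
        fun V hVo hVn => ⟨V, hVo, hVn, HLe_refl α x V⟩⟩
    · constructor
      · intro V hVo hVn
        obtain ⟨W₁, hW₁o, hW₁n, hW₁⟩ := hxy.1 V hVo hVn
        obtain ⟨W₂, hW₂o, hW₂n, hW₂⟩ := hyz.1 W₁ hW₁o hW₁n
        exact ⟨W₂, hW₂o, hW₂n, HLe_trans α hW₂ hW₁⟩
      · intro V hVo hVn
        obtain ⟨W₁, hW₁o, hW₁n, hW₁⟩ := hyz.2 V hVo hVn
        obtain ⟨W₂, hW₂o, hW₂n, hW₂⟩ := hxy.2 W₁ hW₁o hW₁n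
        exact ⟨W₂, hW₂o, hW₂n, HLe_trans α hW₂ hW₁⟩
  · intro g x
    constructor
    · intro V hVo hVn
      refine ⟨(· * g) ⁻¹' V, hVo.preimage (continuous_mul_right g), ?_, HLe_smul' α g x V⟩
      obtain ⟨v, hv⟩ := hVn
      exact ⟨v * g⁻¹, by simpa using hv⟩
    · intro V hVo hVn
      refine ⟨(· * g⁻¹) ⁻¹' V, hVo.preimage (continuous_mul_right g⁻¹), ?_, ?_⟩
      · obtain ⟨v, hv⟩ := hVn
        exact ⟨v * g, by simpa using hv⟩
      · have := HLe_smul (X := X) α g x ((· * g⁻¹) ⁻¹' V)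
        rwa [show (· * g) ⁻¹' ((· * g⁻¹) ⁻¹' V) = V from by ext h; simp] at this
end

section
/- For every countable ordinal α ≥ 1 and open nonempty U, W ⊆ G: (x,U) ≤_α (y,W) if and only if for every Π⁰_α set A ⊆ X, y ∈ A^{*W} implies x ∈ A^{*U}. -/
open Set

variable {G X : Type*}

open Topology

open Set Topology

section MyHelpers

variable {Y : Type*} [TopologicalSpace Y]

lemma my_not_isMeagre [BaireSpace Y] {V : Set Y} (hV : IsOpen V) (hne : V.Nonempty) :
    ¬ IsMeagre V := by
  intro h
  obtain ⟨z, hz1, hz2⟩ := (dense_of_mem_residual h).exists_mem_open hV hne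
  exact hz1 hz2

lemma my_meagre_union {s t : Set Y} (hs : IsMeagre s) (ht : IsMeagre t) :
    IsMeagre (s ∪ t) := by
  rw [IsMeagre, compl_union]
  exact Filter.inter_mem hs ht

lemma my_localize [BaireSpace Y] {S Wo : Set Y}
    (hS : BaireMeasurableSet S) (hWo : IsOpen Wo) (h : ¬ IsMeagre (S ∩ Wo)) :
    ∃ V : Set Y, IsOpen V ∧ V.Nonempty ∧ V ⊆ Wo ∧ IsMeagre (V \ S) := by
  obtain ⟨u, hu, hsu⟩ := hS.residualEq_isOpen
  have hmem : {z | (z ∈ S) = (z ∈ u)} ∈ residual Y := hsu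
  have h1 : IsMeagre (u \ S) := by
    rw [IsMeagre]
    refine Filter.mem_of_superset hmem ?_
    intro z hz
    have hiff : z ∈ S ↔ z ∈ u := iff_of_eq hz
    intro hzu
    exact hzu.2 (hiff.mpr hzu.1)
  have h2 : IsMeagre (S \ u) := by
    rw [IsMeagre]
    refine Filter.mem_of_superset hmem ?_
    intro z hz
    have hiff : z ∈ S ↔ z ∈ u := iff_of_eq hz
    intro hzu
    exact hzu.2 (hiff.mp hzu.1)
  have hne : (u ∩ Wo).Nonempty := by
    rcases (u ∩ Wo).eq_empty_or_nonempty with he | hne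
    · exfalso
      apply h
      apply h2.mono
      intro z hz
      exact ⟨hz.1, fun hzu => (eq_empty_iff_forall_notMem.mp he z ⟨hzu, hz.2⟩)⟩
    · exact hne
  exact ⟨u ∩ Wo, hu.inter hWo, hne, inter_subset_right,
    h1.mono (fun z (hz : z ∈ (u ∩ Wo) \ S) => (⟨hz.1.1, hz.2⟩ : z ∈ u \ S))⟩

end MyHelpers


section MyPi0
variable {Y Z : Type*} [TopologicalSpace Y] [TopologicalSpace Z]

lemma my_pi0_le_one {α : Ordinal} (h : α ≤ 1) :
    (Pi0 α : Set (Set Y)) = {A | IsClosed A} := by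
  rw [Pi0, if_pos h]

lemma my_pi0_gt_one {α : Ordinal} (h : ¬ α ≤ 1) {A : Set Y} :
    A ∈ (Pi0 α : Set (Set Y)) ↔ ∃ f : ℕ → Set Y,
        (∀ n, ∃ β, ∃ _ : 1 ≤ β, ∃ _ : β < α, f n ∈ Pi0 β) ∧ A = ⋂ n, (f n)ᶜ := by
  rw [Pi0, if_neg h]; rfl

lemma my_pi0_mono [PolishSpace Y] {β γ : Ordinal}
    (hβ : 1 ≤ β) (hβγ : β ≤ γ) : (Pi0 β : Set (Set Y)) ⊆ Pi0 γ := by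
  rcases le_or_gt γ 1 with hγ | hγ
  · have hβ1 : β = 1 := le_antisymm (hβγ.trans hγ) hβ
    have hγ1 : γ = 1 := le_antisymm hγ (hβ1 ▸ hβγ)
    rw [hβ1, hγ1]
  · intro A hA
    rw [my_pi0_gt_one (not_le.mpr hγ)]
    rcases le_or_gt β 1 with hβ1 | hβ1
    · have hAc : IsClosed A := by rw [my_pi0_le_one hβ1] at hA; exact hA
      letI := TopologicalSpace.upgradeIsCompletelyMetrizable Y
      obtain ⟨T, hTo, hTc, hTeq⟩ := hAc.isGδ
      rcases T.eq_empty_or_nonempty with rfl | hTne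
      · refine ⟨fun _ => ∅, fun n => ⟨1, le_rfl, hγ, ?_⟩, ?_⟩
        · rw [my_pi0_le_one le_rfl]; exact isClosed_empty
        · simp [hTeq]
      · obtain ⟨e, he⟩ := hTc.exists_surjective hTne
        refine ⟨fun n => ((e n : Set Y))ᶜ, fun n => ⟨1, le_rfl, hγ, ?_⟩, ?_⟩
        · rw [my_pi0_le_one le_rfl]
          exact (hTo _ (e n).2).isClosed_compl
        · rw [hTeq, sInter_eq_iInter, ← he.iInter_comp (fun t => (t : Set Y))]
          simp
    · rw [my_pi0_gt_one (not_le.mpr hβ1)] at hA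
      obtain ⟨f, hf, rfl⟩ := hA
      exact ⟨f, fun n => by
        obtain ⟨δ, h1, h2, h3⟩ := hf n
        exact ⟨δ, h1, h2.trans_le hβγ, h3⟩, rfl⟩

lemma my_pi0_iInter {γ : Ordinal} (f : ℕ → Set Y)
    (hf : ∀ n, f n ∈ (Pi0 γ : Set (Set Y))) : (⋂ n, f n) ∈ (Pi0 γ : Set (Set Y)) := by
  rcases le_or_gt γ 1 with hγ | hγ
  · rw [my_pi0_le_one hγ]
    have : ∀ n, IsClosed (f n) := fun n => by
      have := hf n; rwa [my_pi0_le_one hγ] at this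
    exact isClosed_iInter this
  · have h' := fun n => (my_pi0_gt_one (not_le.mpr hγ)).mp (hf n)
    choose F hF hFeq using h'
    set e : ℕ ≃ ℕ × ℕ := (Denumerable.eqv (ℕ × ℕ)).symm with hedef
    refine (my_pi0_gt_one (not_le.mpr hγ)).mpr
      ⟨fun k => F (e k).1 (e k).2, fun k => hF _ _, ?_⟩
    ext z
    simp only [mem_iInter, mem_compl_iff]
    constructor
    · intro h k
      have hz := h (e k).1
      rw [hFeq] at hz
      simp only [mem_iInter, mem_compl_iff] at hz
      exact hz (e k).2
    · intro h n
      rw [hFeq]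
      simp only [mem_iInter, mem_compl_iff]
      intro m
      have hkey := h (e.symm (n, m))
      rw [Equiv.apply_symm_apply] at hkey
      exact hkey
  
lemma my_pi0_compl_succ {γ : Ordinal} (hγ : 1 ≤ γ) {B : Set Y}
    (hB : B ∈ (Pi0 γ : Set (Set Y))) : Bᶜ ∈ (Pi0 (γ + 1) : Set (Set Y)) := by
  have hlt : γ < γ + 1 := by rw [Ordinal.add_one_eq_succ]; exact Order.lt_succ _
  refine (my_pi0_gt_one (not_le.mpr (hγ.trans_lt hlt))).mpr
    ⟨fun _ => B, fun n => ⟨γ, hγ, hlt, hB⟩, ?_⟩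
  rw [iInter_const]

lemma my_pi0_preimage {φ : Z → Y} (hφ : Continuous φ) (γ : Ordinal) :
    ∀ {A : Set Y}, A ∈ (Pi0 γ : Set (Set Y)) → φ ⁻¹' A ∈ (Pi0 γ : Set (Set Z)) := by
  induction γ using Ordinal.induction with
  | h γ IH =>
    intro A hA
    rcases le_or_gt γ 1 with hγ | hγ
    · rw [my_pi0_le_one hγ] at hA ⊢
      exact hA.preimage hφ
    · rw [my_pi0_gt_one (not_le.mpr hγ)] at hA ⊢
      obtain ⟨f, hf, rfl⟩ := hA
      refine ⟨fun n => φ ⁻¹' (f n), fun n => ?_, by simp [preimage_iInter]⟩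
      obtain ⟨β, h1, h2, h3⟩ := hf n
      exact ⟨β, h1, h2, IH β h2 h3⟩

lemma my_pi0_baireMeasurable (γ : Ordinal) :
    ∀ {A : Set Y}, A ∈ (Pi0 γ : Set (Set Y)) → BaireMeasurableSet A := by
  induction γ using Ordinal.induction with
  | h γ IH =>
    intro A hA
    rcases le_or_gt γ 1 with hγ | hγ
    · rw [my_pi0_le_one hγ] at hA
      exact BaireMeasurableSet.of_compl (hA.isOpen_compl.baireMeasurableSet)
    · rw [my_pi0_gt_one (not_le.mpr hγ)] at hA
      obtain ⟨f, hf, rfl⟩ := hA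
      refine BaireMeasurableSet.iInter fun n => ?_
      obtain ⟨β, h1, h2, h3⟩ := hf n
      exact (IH β h2 h3).compl

end MyPi0

section MyHLe

variable {G X : Type*} [Group G] [TopologicalSpace G] [TopologicalSpace X] [MulAction G X]

lemma my_hle_le_one {α : Ordinal} (h : α ≤ 1) {x y : X} {U W : Set G} :
    HLe α x U y W ↔ closure ((· • x) '' U) ⊆ closure ((· • y) '' W) := by
  rw [HLe, if_pos h]

lemma my_hle_succ {γ : Ordinal} (hγ : 1 ≤ γ) {x y : X} {U W : Set G} :
    HLe (γ + 1) x U y W ↔ ∀ W₀ : Set G, IsOpen W₀ → W₀.Nonempty → W₀ ⊆ U →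
      ∃ W₁ : Set G, IsOpen W₁ ∧ W₁.Nonempty ∧ W₁ ⊆ W ∧ HLe γ y W₁ x W₀ := by
  have h1 : ¬ (γ + 1 ≤ 1) := by
    rw [not_le]
    calc (1:Ordinal) ≤ γ := hγ
    _ < γ + 1 := by rw [Ordinal.add_one_eq_succ]; exact Order.lt_succ _
  have h2 : ∃ β : Ordinal, γ + 1 = β + 1 := ⟨γ, rfl⟩
  have key : ∀ a b : Ordinal, a + 1 = b + 1 → b = a := by
    intro a b h
    rw [Ordinal.add_one_eq_succ, Ordinal.add_one_eq_succ] at h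
    exact (Order.succ_injective h).symm
  have h3 : h2.choose = γ := key γ h2.choose h2.choose_spec
  rw [HLe, if_neg h1, dif_pos h2, h3]

lemma my_hle_limit {α : Ordinal} (h1 : ¬ α ≤ 1) (h2 : ¬ ∃ β : Ordinal, α = β + 1)
    {x y : X} {U W : Set G} :
    HLe α x U y W ↔ ∀ β, 1 ≤ β → β < α → HLe β x U y W := by
  rw [HLe, if_neg h1, dif_neg h2]

end MyHLe

theorem my_main_aux [Group G] [TopologicalSpace G] [PolishSpace G]
    [TopologicalSpace X] [PolishSpace X] [MulAction G X] [ContinuousSMul G X] :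
    ∀ α : Ordinal, 1 ≤ α → ∀ (x y : X) (U W : Set G),
      IsOpen U → U.Nonempty → IsOpen W → W.Nonempty →
    (HLe α x U y W ↔
      ∀ A : Set X, A ∈ Pi0 α → y ∈ vaughtStar (G := G) A W → x ∈ vaughtStar (G := G) A U) := by
  haveI : BaireSpace G := by letI := TopologicalSpace.upgradeIsCompletelyMetrizable G; infer_instance
  intro α
  induction α using Ordinal.induction with
  | h α IH =>
    intro hα1 x y U W hU hUne hW hWne
    have hcont : ∀ z : X, Continuous (fun g : G => g • z) :=
      fun z => continuous_id.smul continuous_const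
    rcases le_or_gt α 1 with hle1 | hgt1
    · -- base case α = 1
      have hα : α = 1 := le_antisymm hle1 hα1
      subst hα
      rw [my_hle_le_one le_rfl]
      constructor
      · intro hcl A hA hyW
        rw [my_pi0_le_one le_rfl] at hA
        have hA' : IsClosed (A : Set X) := hA
        have hSy : IsClosed {g : G | g • y ∈ A} := hA'.preimage (hcont y)
        have hopen : IsOpen (W \ {g : G | g • y ∈ A}) := hW.sdiff hSy
        have hempty : W \ {g : G | g • y ∈ A} = ∅ := by
          by_contra hne
          exact my_not_isMeagre hopen (nonempty_iff_ne_empty.mpr hne) hyW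
        have hWy : (· • y) '' W ⊆ A := by
          rintro _ ⟨g, hg, rfl⟩
          by_contra hgA
          exact (eq_empty_iff_forall_notMem.mp hempty g) ⟨hg, hgA⟩
        have hsub : U ⊆ {g : G | g • x ∈ A} := by
          intro g hg
          have hmem : g • x ∈ closure ((· • x) '' U) := subset_closure ⟨g, hg, rfl⟩
          exact (closure_minimal hWy hA') (hcl hmem)
        show IsMeagre (U \ {g : G | g • x ∈ A})
        have he : U \ {g : G | g • x ∈ A} = ∅ := by
          rw [diff_eq_empty]; exact hsub
        rw [he]; exact IsMeagre.empty
      · intro htr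
        set A := closure ((· • y) '' W) with hA
        have hyW : y ∈ vaughtStar (G := G) A W := by
          show IsMeagre (W \ {g : G | g • y ∈ A})
          have he : W \ {g : G | g • y ∈ A} = ∅ := by
            rw [diff_eq_empty]
            intro g hg
            exact subset_closure ⟨g, hg, rfl⟩
          rw [he]; exact IsMeagre.empty
        have hx := htr A (by rw [my_pi0_le_one le_rfl]; exact isClosed_closure) hyW
        have hSx : IsClosed {g : G | g • x ∈ A} := isClosed_closure.preimage (hcont x)
        have hopen : IsOpen (U \ {g : G | g • x ∈ A}) := hU.sdiff hSx
        have hempty : U \ {g : G | g • x ∈ A} = ∅ := by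
          by_contra hne
          exact my_not_isMeagre hopen (nonempty_iff_ne_empty.mpr hne) hx
        apply closure_minimal _ isClosed_closure
        rintro _ ⟨g, hg, rfl⟩
        by_contra hgA
        exact (eq_empty_iff_forall_notMem.mp hempty g) ⟨hg, hgA⟩
    · -- α > 1
      have hn1 : ¬ α ≤ 1 := not_le.mpr hgt1
      constructor
      · -- forward direction
        intro hle A hA hyW
        rw [my_pi0_gt_one hn1] at hA
        obtain ⟨f, hf, rfl⟩ := hA
        show IsMeagre (U \ {g : G | g • x ∈ ⋂ n, (f n)ᶜ})
        have hdecomp : U \ {g : G | g • x ∈ ⋂ n, (f n)ᶜ}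
            = ⋃ n, ({g : G | g • x ∈ f n} ∩ U) := by
          ext g
          simp only [mem_diff, mem_setOf_eq, mem_iInter, mem_compl_iff, not_forall, not_not,
            mem_iUnion, mem_inter_iff]
          tauto
        rw [hdecomp]
        apply isMeagre_iUnion
        intro n
        by_contra hnm
        obtain ⟨β, hβ1, hβα, hfn⟩ := hf n
        have hbm : BaireMeasurableSet {g : G | g • x ∈ f n} :=
          my_pi0_baireMeasurable β (my_pi0_preimage (hcont x) β hfn)
        obtain ⟨V₀, hV₀o, hV₀ne, hV₀U, hV₀m⟩ := my_localize hbm hU hnm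
        have hstep : ∃ γ : Ordinal, 1 ≤ γ ∧ γ < α ∧ β ≤ γ ∧
            ∃ W₁ : Set G, IsOpen W₁ ∧ W₁.Nonempty ∧ W₁ ⊆ W ∧ HLe γ y W₁ x V₀ := by
          by_cases hsucc : ∃ δ : Ordinal, α = δ + 1
          · obtain ⟨δ, rfl⟩ := hsucc
            have hδ1 : 1 ≤ δ := by
              by_contra hlt
              rw [not_le, Ordinal.lt_one_iff_zero] at hlt
              subst hlt
              simp at hgt1
            have hβδ : β ≤ δ := by
              rw [Ordinal.add_one_eq_succ, Order.lt_succ_iff] at hβα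
              exact hβα
            have hδα : δ < δ + 1 := by
              rw [Ordinal.add_one_eq_succ]; exact Order.lt_succ _
            obtain ⟨W₁, h1, h2, h3, h4⟩ := (my_hle_succ hδ1).mp hle V₀ hV₀o hV₀ne hV₀U
            exact ⟨δ, hδ1, hδα, hβδ, W₁, h1, h2, h3, h4⟩
          · have hβ1α : β + 1 < α := by
              have hle' : β + 1 ≤ α := by
                rw [Ordinal.add_one_eq_succ]; exact Order.succ_le_of_lt hβα
              rcases lt_or_eq_of_le hle' with h | h
              · exact h
              · exact absurd ⟨β, h.symm⟩ hsucc
            have h11 : (1:Ordinal) ≤ β + 1 :=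
              hβ1.trans (by rw [Ordinal.add_one_eq_succ]; exact (Order.lt_succ β).le)
            have hβsucc := (my_hle_limit hn1 hsucc).mp hle (β + 1) h11 hβ1α
            obtain ⟨W₁, h1, h2, h3, h4⟩ := (my_hle_succ hβ1).mp hβsucc V₀ hV₀o hV₀ne hV₀U
            exact ⟨β, hβ1, hβα, le_rfl, W₁, h1, h2, h3, h4⟩
        obtain ⟨γ, hγ1, hγα, hβγ, W₁, hW₁o, hW₁ne, hW₁W, hleγ⟩ := hstep
        have hyfn : y ∈ vaughtStar (G := G) (f n) W₁ :=
          (IH γ hγα hγ1 y x W₁ V₀ hW₁o hW₁ne hV₀o hV₀ne).mp hleγ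
            (f n) (my_pi0_mono hβ1 hβγ hfn) hV₀m
        have hm1 : IsMeagre (W₁ \ {g : G | g • y ∈ f n}) := hyfn
        have hm2 : IsMeagre (W₁ ∩ {g : G | g • y ∈ f n}) := by
          apply hyW.mono
          intro g hg
          refine ⟨hW₁W hg.1, ?_⟩
          intro hgA
          rw [mem_setOf_eq, mem_iInter] at hgA
          exact (hgA n) hg.2
        refine my_not_isMeagre hW₁o hW₁ne ((my_meagre_union hm1 hm2).mono ?_)
        intro g hg
        by_cases hfg : g • y ∈ f n
        · exact Or.inr ⟨hg, hfg⟩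
        · exact Or.inl ⟨hg, hfg⟩
      · -- backward direction
        intro htr
        by_cases hsucc : ∃ δ : Ordinal, α = δ + 1
        · obtain ⟨δ, rfl⟩ := hsucc
          have hδ1 : 1 ≤ δ := by
            by_contra hlt
            rw [not_le, Ordinal.lt_one_iff_zero] at hlt
            subst hlt
            simp at hgt1
          have hδα : δ < δ + 1 := by
            rw [Ordinal.add_one_eq_succ]; exact Order.lt_succ _
          rw [my_hle_succ hδ1]
          intro W₀ hW₀o hW₀ne hW₀U
          by_contra hno
          push_neg at hno
          obtain ⟨b, hbc, hbne, hbb⟩ := TopologicalSpace.exists_countable_basis G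
          set T : Set (Set G) := {V ∈ b | V ⊆ W} with hT
          have hTc : T.Countable := hbc.mono (sep_subset _ _)
          have hTne : T.Nonempty := by
            obtain ⟨g, hg⟩ := hWne
            obtain ⟨V, hVb, hgV, hVW⟩ := hbb.exists_subset_of_mem_open hg hW
            exact ⟨V, hVb, hVW⟩
          have hbad : ∀ V : T, ∃ B : Set X, B ∈ (Pi0 δ : Set (Set X)) ∧
              x ∈ vaughtStar (G := G) B W₀ ∧ ¬ y ∈ vaughtStar (G := G) B (V : Set G) := by
            rintro ⟨V, hVb, hVW⟩
            have hVo : IsOpen V := hbb.isOpen hVb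
            have hVne : V.Nonempty := nonempty_iff_ne_empty.mpr (fun h => hbne (h ▸ hVb))
            have hnle := hno V hVo hVne hVW
            rw [IH δ hδα hδ1 y x V W₀ hVo hVne hW₀o hW₀ne] at hnle
            push_neg at hnle
            exact hnle
          choose Bf hBf1 hBf2 hBf3 using hbad
          obtain ⟨e, he⟩ := hTc.exists_surjective hTne
          set B : Set X := ⋂ n, Bf (e n) with hB
          have hBPi : B ∈ (Pi0 δ : Set (Set X)) := my_pi0_iInter _ (fun n => hBf1 (e n))
          have hxB : x ∈ vaughtStar (G := G) B W₀ := by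
            show IsMeagre (W₀ \ {g : G | g • x ∈ B})
            refine (isMeagre_iUnion (f := fun n => W₀ \ {g : G | g • x ∈ Bf (e n)})
              (fun n => hBf2 (e n))).mono ?_
            intro g hg
            obtain ⟨hgW, hgB⟩ := hg
            simp only [mem_setOf_eq, hB, mem_iInter, not_forall] at hgB
            obtain ⟨n, hn⟩ := hgB
            exact mem_iUnion.mpr ⟨n, hgW, hn⟩
          have hSBm : IsMeagre ({g : G | g • y ∈ B} ∩ W) := by
            by_contra hnm
            have hbm : BaireMeasurableSet {g : G | g • y ∈ B} :=
              my_pi0_baireMeasurable δ (my_pi0_preimage (hcont y) δ hBPi)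
            obtain ⟨V, hVo, hVne, hVW, hVm⟩ := my_localize hbm hW hnm
            obtain ⟨g, hg⟩ := hVne
            obtain ⟨V', hV'b, hgV', hV'V⟩ := hbb.exists_subset_of_mem_open hg hVo
            have hV'T : V' ∈ T := ⟨hV'b, hV'V.trans hVW⟩
            obtain ⟨n, hn⟩ := he ⟨V', hV'T⟩
            apply hBf3 (e n)
            show IsMeagre ((e n : Set G) \ {g : G | g • y ∈ Bf (e n)})
            refine hVm.mono ?_
            intro g' hg'
            have hg'1 : g' ∈ (e n : Set G) := hg'.1
            have hg'2 : g' • y ∉ Bf (e n) := hg'.2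
            rw [hn] at hg'1
            refine ⟨hV'V hg'1, fun hgB => hg'2 ?_⟩
            have : g' • y ∈ ⋂ m, Bf (e m) := hgB
            rw [mem_iInter] at this
            exact this n
          set A : Set X := Bᶜ with hA
          have hAPi : A ∈ (Pi0 (δ + 1) : Set (Set X)) := my_pi0_compl_succ hδ1 hBPi
          have hyA : y ∈ vaughtStar (G := G) A W := by
            show IsMeagre (W \ {g : G | g • y ∈ A})
            apply hSBm.mono
            intro g hg
            refine ⟨?_, hg.1⟩
            have hg2 := hg.2
            simp only [hA, mem_setOf_eq, mem_compl_iff, not_not] at hg2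
            exact hg2
          have hxA := htr A hAPi hyA
          have hm2 : IsMeagre (W₀ ∩ {g : G | g • x ∈ B}) := by
            apply hxA.mono
            intro g hg
            exact ⟨hW₀U hg.1, fun hc => hc hg.2⟩
          have hm1 : IsMeagre (W₀ \ {g : G | g • x ∈ B}) := hxB
          refine my_not_isMeagre hW₀o hW₀ne ((my_meagre_union hm1 hm2).mono ?_)
          intro g hg
          by_cases hgB : g • x ∈ B
          · exact Or.inr ⟨hg, hgB⟩
          · exact Or.inl ⟨hg, hgB⟩
        · -- limit case
          rw [my_hle_limit hn1 hsucc]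
          intro β hβ1 hβα
          rw [IH β hβα hβ1 x y U W hU hUne hW hWne]
          intro A hA hyW
          exact htr A (my_pi0_mono hβ1 hβα.le hA) hyW

theorem stmt7 [Group G] [TopologicalSpace G] [IsTopologicalGroup G] [PolishSpace G]
    [TopologicalSpace X] [PolishSpace X] [MulAction G X] [ContinuousSMul G X]
    (α : Ordinal) (hα1 : 1 ≤ α) (hα : α < (Cardinal.aleph 1).ord)
    (x y : X) (U W : Set G)
    (hU : IsOpen U) (hUne : U.Nonempty) (hW : IsOpen W) (hWne : W.Nonempty) :
    HLe α x U y W ↔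
      ∀ A : Set X, A ∈ Pi0 α → y ∈ vaughtStar (G := G) A W → x ∈ vaughtStar (G := G) A U := by
  exact my_main_aux α hα1 x y U W hU hUne hW hWne
end

section
/- If x ≡_α y (i.e., for each of x, y and each open nonempty V there is an open nonempty W with (·,W) ≤_α (·,V) across the pair), then x and y belong to exactly the same G-invariant Π⁰_α subsets of X. -/
open Set

variable {G X : Type*}

section Auxiliary

/-- Nonempty open sets in a Baire space are nonmeager. -/
lemma open_not_isMeagre {Y : Type*} [TopologicalSpace Y] [BaireSpace Y] {U : Set Y}
    (hU : IsOpen U) (hne : U.Nonempty) : ¬ IsMeagre U := by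
  intro h
  have hd : Dense Uᶜ := dense_of_mem_residual h
  obtain ⟨g, hgU, hgC⟩ := hd.inter_open_nonempty U hU hne
  exact hgC hgU

/-- If `W \ D` is meagre and `W` is open, then `W ⊆ closure (W ∩ D)`. -/
lemma subset_closure_of_meagre_diff {Y : Type*} [TopologicalSpace Y] [BaireSpace Y]
    {W D : Set Y} (hW : IsOpen W) (h : IsMeagre (W \ D)) : W ⊆ closure (W ∩ D) := by
  intro g hg
  rw [mem_closure_iff]
  intro O hO hgO
  by_contra hemp
  rw [Set.not_nonempty_iff_eq_empty] at hemp
  have hsub : O ∩ W ⊆ W \ D := by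
    intro a ⟨haO, haW⟩
    refine ⟨haW, fun haD => ?_⟩
    have : a ∈ O ∩ (W ∩ D) := ⟨haO, haW, haD⟩
    rw [hemp] at this; exact this
  exact open_not_isMeagre (hO.inter hW) ⟨g, hgO, hg⟩ (h.mono hsub)

/-- A nonmeager Baire-measurable set is comeager in some nonempty open set. -/
lemma exists_open_diff_meagre {Y : Type*} [TopologicalSpace Y] [BaireSpace Y] {S : Set Y}
    (hS : BaireMeasurableSet S) (h : ¬ IsMeagre S) :
    ∃ U : Set Y, IsOpen U ∧ U.Nonempty ∧ IsMeagre (U \ S) := by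
  obtain ⟨u, huo, hsu⟩ := hS.residualEq_isOpen
  have hres : {y | S y = u y} ∈ residual Y := hsu
  have hmeag : IsMeagre {y | ¬ (S y = u y)} := by
    rw [IsMeagre, Set.compl_setOf]
    simpa using hres
  refine ⟨u, huo, ?_, ?_⟩
  · rcases Set.eq_empty_or_nonempty u with rfl | hne
    · exfalso
      refine h (hmeag.mono fun y hy => ?_)
      simp only [Set.mem_setOf_eq, eq_iff_iff]
      intro hiff
      exact (hiff.1 hy).elim
    · exact hne
  · refine hmeag.mono fun y ⟨hyu, hyS⟩ => ?_
    simp only [Set.mem_setOf_eq, eq_iff_iff]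
    intro hiff
    exact hyS (hiff.2 hyu)

variable [Group G] [TopologicalSpace G] [TopologicalSpace X] [MulAction G X]
  [ContinuousSMul G X]

lemma continuous_smul_point (x : X) : Continuous fun g : G => g • x :=
  continuous_id.smul continuous_const

/-- Preimages of `Π⁰_γ` sets under `g ↦ g • x` are Baire measurable. -/
lemma baireMeasurable_pi0_preimage (γ : Ordinal) :
    ∀ A : Set X, A ∈ Pi0 γ → ∀ x : X, BaireMeasurableSet {g : G | g • x ∈ A} := by
  induction γ using Ordinal.induction with
  | h γ IH =>
  intro A hA x
  by_cases hγ : γ ≤ 1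
  · rw [Pi0, if_pos hγ] at hA
    have hcl : IsClosed {g : G | g • x ∈ A} := hA.preimage (continuous_smul_point x)
    exact hcl.isOpen_compl.baireMeasurableSet.of_compl
  · rw [Pi0, if_neg hγ] at hA
    obtain ⟨f, hf, rfl⟩ := hA
    have : {g : G | g • x ∈ ⋂ n, (f n)ᶜ} = ⋂ n, {g : G | g • x ∈ f n}ᶜ := by
      ext g; simp
    rw [this]
    refine BaireMeasurableSet.iInter fun n => ?_
    obtain ⟨β, hβ1, hβγ, hfn⟩ := hf n
    exact (IH β hβγ (f n) hfn x).compl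

end Auxiliary

section Key

variable [Group G] [TopologicalSpace G] [IsTopologicalGroup G] [PolishSpace G]
    [TopologicalSpace X] [PolishSpace X] [MulAction G X] [ContinuousSMul G X]

lemma meagre_union {Y : Type*} [TopologicalSpace Y] {s t : Set Y}
    (hs : IsMeagre s) (ht : IsMeagre t) : IsMeagre (s ∪ t) := by
  rw [IsMeagre, Set.compl_union]
  exact Filter.inter_mem hs ht

omit [IsTopologicalGroup G] [PolishSpace G] [TopologicalSpace X] [PolishSpace X]
  [ContinuousSMul G X] in
lemma vaughtStar_mono_set {A : Set X} {W W' : Set G} (hWW : W' ⊆ W) {z : X}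
    (h : z ∈ vaughtStar A W) : z ∈ vaughtStar A W' :=
  IsMeagre.mono (Set.diff_subset_diff_left hWW) h

omit [IsTopologicalGroup G] [PolishSpace G] [TopologicalSpace X] [PolishSpace X]
  [ContinuousSMul G X] in
lemma vaughtStar_mono_target {A B : Set X} (hAB : A ⊆ B) {W : Set G} {z : X}
    (h : z ∈ vaughtStar A W) : z ∈ vaughtStar B W :=
  IsMeagre.mono (Set.diff_subset_diff_right fun g hg => hAB hg) h

include X in
lemma baireG : BaireSpace G := by
  letI := TopologicalSpace.upgradeIsCompletelyMetrizable G; infer_instance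

/-- The key transfer lemma: if `(x,V) ≤_α (y,W)` then every `Π⁰_γ` (`γ ≤ α`) Vaught-star
membership transfers from `(y,W)` to `(x,V)`. -/
theorem key_transfer : ∀ (α : Ordinal) (x y : X) (V W : Set G), IsOpen V → V.Nonempty →
    IsOpen W → W.Nonempty → HLe α x V y W → ∀ γ ≤ α, ∀ A ∈ Pi0 γ,
    y ∈ vaughtStar A W → x ∈ vaughtStar A V := by
  haveI : BaireSpace G := baireG (X := X)
  haveI : RegularSpace X := by letI := TopologicalSpace.upgradeIsCompletelyMetrizable X; infer_instance
  intro α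
  induction α using Ordinal.induction with
  | h α IH =>
  intro x y V W hV hVne hW hWne hle γ hγ A hA hy
  by_cases hα1 : α ≤ 1
  -- base case : `α ≤ 1`, `A` is closed
  · rw [Pi0, if_pos (hγ.trans hα1)] at hA
    rw [HLe, if_pos hα1] at hle
    have hyA : IsMeagre (W \ {g : G | g • y ∈ A}) := hy
    have hWsub : W ⊆ closure (W ∩ {g : G | g • y ∈ A}) :=
      subset_closure_of_meagre_diff hW hyA
    have himg : closure ((· • y) '' W) ⊆ A := by
      have h1 : (· • y) '' W ⊆ A := by
        rintro p ⟨g, hg, rfl⟩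
        have h2 : g • y ∈ closure ((· • y) '' (W ∩ {g : G | g • y ∈ A})) :=
          image_closure_subset_closure_image (continuous_smul_point y) ⟨g, hWsub hg, rfl⟩
        refine closure_minimal ?_ hA h2
        rintro p ⟨g', ⟨-, hg'⟩, rfl⟩
        exact hg'
      exact closure_minimal h1 hA
    have hVA : ∀ g ∈ V, g • x ∈ A := by
      intro g hg
      exact himg (hle (subset_closure ⟨g, hg, rfl⟩))
    show IsMeagre (V \ {g : G | g • x ∈ A})
    have : V \ {g : G | g • x ∈ A} = ∅ := by
      rw [Set.diff_eq_empty]; exact fun g hg => hVA g hg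
    rw [this]; exact IsMeagre.empty
  · by_cases hs : ∃ β, α = β + 1
    -- successor case
    · rw [HLe, if_neg hα1, dif_pos hs] at hle
      have hαβ : α = hs.choose + 1 := hs.choose_spec
      set β := hs.choose with hβdef
      have hβ1 : 1 ≤ β := by
        have : (1 : Ordinal) < β + 1 := by rw [← hαβ]; exact not_le.1 hα1
        rwa [Ordinal.add_one_eq_succ, Order.lt_succ_iff] at this
      have hβα : β < α := by
        rw [hαβ, Ordinal.add_one_eq_succ]; exact Order.lt_succ β
      by_contra hx
      -- find a `Π⁰_δ` set `C` with `δ ≤ β`, disjoint from `A`, with `x ∈ C^{*V₁}`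
      -- for some open nonempty `V₁ ⊆ V`
      have main : ∃ (C : Set X) (δ : Ordinal), 1 ≤ δ ∧ δ ≤ β ∧ C ∈ Pi0 δ ∧ (A ∩ C = ∅) ∧
          ∃ V₁ : Set G, IsOpen V₁ ∧ V₁.Nonempty ∧ V₁ ⊆ V ∧ x ∈ vaughtStar C V₁ := by
        by_cases hγ1 : γ ≤ 1
        · -- `A` closed : use regularity of `X`
          rw [Pi0, if_pos hγ1] at hA
          have hopen : IsOpen (V ∩ {g : G | g • x ∈ Aᶜ}) :=
            hV.inter (hA.isOpen_compl.preimage (continuous_smul_point x))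
          have hne : (V ∩ {g : G | g • x ∈ Aᶜ}).Nonempty := by
            rcases Set.eq_empty_or_nonempty (V ∩ {g : G | g • x ∈ Aᶜ}) with he | hne
            · exfalso; apply hx
              show IsMeagre (V \ {g : G | g • x ∈ A})
              have : V \ {g : G | g • x ∈ A} = ∅ := by
                rw [Set.diff_eq_empty]
                intro g hg
                by_contra hgA
                exact absurd (Set.eq_empty_iff_forall_notMem.1 he g ⟨hg, hgA⟩) (fun h => h)
              rw [this]; exact IsMeagre.empty
            · exact hne
          obtain ⟨g₀, hg₀V, hg₀A⟩ := hne
          have hnhds : Aᶜ ∈ nhds (g₀ • x) := hA.isOpen_compl.mem_nhds hg₀A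
          obtain ⟨C, ⟨hCnhds, hCclosed⟩, hCsub⟩ := (closed_nhds_basis (g₀ • x)).mem_iff.1 hnhds
          refine ⟨C, 1, le_rfl, hβ1, ?_, ?_, ?_⟩
          · rw [Pi0, if_pos le_rfl]; exact hCclosed
          · rw [Set.eq_empty_iff_forall_notMem]
            rintro p ⟨hpA, hpC⟩; exact hCsub hpC hpA
          · refine ⟨V ∩ {g : G | g • x ∈ interior C}, hV.inter (isOpen_interior.preimage
              (continuous_smul_point x)), ⟨g₀, hg₀V, mem_interior_iff_mem_nhds.2 hCnhds⟩,
              Set.inter_subset_left, ?_⟩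
            show IsMeagre _
            have : (V ∩ {g : G | g • x ∈ interior C}) \ {g : G | g • x ∈ C} = ∅ := by
              rw [Set.diff_eq_empty]
              rintro g ⟨-, hg⟩
              show g • x ∈ C
              exact interior_subset hg
            rw [this]; exact IsMeagre.empty
        · -- `A = ⋂ (f n)ᶜ` : use Baire measurability
          rw [Pi0, if_neg hγ1] at hA
          obtain ⟨f, hf, rfl⟩ := hA
          have hdecomp : V \ {g : G | g • x ∈ ⋂ n, (f n)ᶜ} =
              ⋃ n, (V ∩ {g : G | g • x ∈ f n}) := by
            ext g
            simp only [Set.mem_diff, Set.mem_setOf_eq, Set.mem_iInter, Set.mem_compl_iff,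
              Set.mem_iUnion, Set.mem_inter_iff, not_forall, not_not]
            tauto
          have : ∃ n, ¬ IsMeagre (V ∩ {g : G | g • x ∈ f n}) := by
            by_contra hall
            push_neg at hall
            apply hx
            show IsMeagre _
            rw [hdecomp]
            exact isMeagre_iUnion fun n => hall n
          obtain ⟨n, hn⟩ := this
          obtain ⟨δ, hδ1, hδγ, hfn⟩ := hf n
          have hδβ : δ ≤ β := by
            have : δ < β + 1 := lt_of_lt_of_le hδγ (hαβ ▸ hγ)
            rwa [Ordinal.add_one_eq_succ, Order.lt_succ_iff] at this
          have hbms : BaireMeasurableSet (V ∩ {g : G | g • x ∈ f n}) :=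
            hV.baireMeasurableSet.inter (baireMeasurable_pi0_preimage δ (f n) hfn x)
          obtain ⟨U, hUo, hUne, hUmeag⟩ := exists_open_diff_meagre hbms hn
          have hUV : (U ∩ V).Nonempty := by
            rcases Set.eq_empty_or_nonempty (U ∩ V) with he | hne
            · exfalso
              refine open_not_isMeagre hUo hUne (hUmeag.mono (t := U) (s := U \ (V ∩ {g : G | g • x ∈ f n})) fun g hg => ⟨hg, ?_⟩)
              rintro ⟨hgV, -⟩
              exact absurd (Set.eq_empty_iff_forall_notMem.1 he g ⟨hg, hgV⟩) (fun h => h)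
            · exact hne
          refine ⟨f n, δ, hδ1, hδβ, hfn, ?_, U ∩ V, hUo.inter hV, hUV,
            Set.inter_subset_right, ?_⟩
          · rw [Set.eq_empty_iff_forall_notMem]
            rintro p ⟨hpA, hpC⟩
            exact (Set.mem_iInter.1 hpA n) hpC
          · show IsMeagre _
            refine hUmeag.mono ?_
            rintro g ⟨⟨hgU, hgV⟩, hgf⟩
            exact ⟨hgU, fun h => hgf h.2⟩
      obtain ⟨C, δ, hδ1, hδβ, hC, hdisj, V₁, hV₁o, hV₁ne, hV₁V, hxC⟩ := main
      obtain ⟨W₁, hW₁o, hW₁ne, hW₁W, hle'⟩ := hle V₁ hV₁o hV₁ne hV₁V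
      have hyC : y ∈ vaughtStar C W₁ :=
        IH β hβα y x W₁ V₁ hW₁o hW₁ne hV₁o hV₁ne hle' δ hδβ C hC hxC
      have hyA : y ∈ vaughtStar A W₁ := vaughtStar_mono_set hW₁W hy
      have hun : IsMeagre ((W₁ \ {g : G | g • y ∈ A}) ∪ (W₁ \ {g : G | g • y ∈ C})) :=
        meagre_union hyA hyC
      refine open_not_isMeagre hW₁o hW₁ne (hun.mono ?_)
      intro g hg
      by_cases hgA : g • y ∈ A
      · have hgC : g • y ∉ C := fun h =>
          absurd (Set.eq_empty_iff_forall_notMem.1 hdisj (g • y) ⟨hgA, h⟩) (fun h => h)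
        exact Or.inr ⟨hg, hgC⟩
      · exact Or.inl ⟨hg, hgA⟩
    -- limit case
    · rw [HLe, if_neg hα1, dif_neg hs] at hle
      by_cases hγ1 : γ ≤ 1
      · exact IH 1 (not_le.1 hα1) x y V W hV hVne hW hWne (hle 1 le_rfl (not_le.1 hα1))
          γ hγ1 A hA hy
      · rw [Pi0, if_neg hγ1] at hA
        obtain ⟨f, hf, rfl⟩ := hA
        show IsMeagre _
        have hdecomp : V \ {g : G | g • x ∈ ⋂ n, (f n)ᶜ} =
            ⋃ n, (V \ {g : G | g • x ∈ (f n)ᶜ}) := by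
          ext g
          simp only [Set.mem_diff, Set.mem_setOf_eq, Set.mem_iInter, Set.mem_compl_iff,
            Set.mem_iUnion, not_forall, not_not]
          tauto
        rw [hdecomp]
        refine isMeagre_iUnion fun n => ?_
        obtain ⟨δ, hδ1, hδγ, hfn⟩ := hf n
        have hδα : δ < α := lt_of_lt_of_le hδγ hγ
        have hsδ1 : (1 : Ordinal) ≤ δ + 1 := le_of_lt (by
          rw [Ordinal.add_one_eq_succ]
          exact lt_of_le_of_lt hδ1 (Order.lt_succ δ))
        have hsδα : δ + 1 < α := by
          have hle1 : δ + 1 ≤ α := by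
            rw [Ordinal.add_one_eq_succ]; exact Order.succ_le_of_lt hδα
          rcases lt_or_eq_of_le hle1 with h | h
          · exact h
          · exact absurd ⟨δ, h.symm⟩ hs
        have hfc : (f n)ᶜ ∈ Pi0 (δ + 1) := by
          rw [Pi0, if_neg (by
            rw [Ordinal.add_one_eq_succ, not_le, Order.lt_succ_iff]; exact hδ1)]
          exact ⟨fun _ => f n, fun m => ⟨δ, hδ1, by
            rw [Ordinal.add_one_eq_succ]; exact Order.lt_succ δ, hfn⟩, (Set.iInter_const _).symm⟩
        have hyfc : y ∈ vaughtStar (f n)ᶜ W :=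
          vaughtStar_mono_target (fun p hp => Set.mem_iInter.1 hp n) hy
        exact IH (δ + 1) hsδα x y V W hV hVne hW hWne (hle (δ + 1) hsδ1 hsδα)
          (δ + 1) le_rfl ((f n)ᶜ) hfc hyfc

end Key

theorem stmt8 [Group G] [TopologicalSpace G] [IsTopologicalGroup G] [PolishSpace G]
    [TopologicalSpace X] [PolishSpace X] [MulAction G X] [ContinuousSMul G X]
    (α : Ordinal) (hα1 : 1 ≤ α) (hα : α < (Cardinal.aleph 1).ord)
    (x y : X) (h : HEquiv (G := G) α x y) :
    ∀ A : Set X, A ∈ Pi0 α → (∀ g : G, (g • ·) '' A = A) → (x ∈ A ↔ y ∈ A) := by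
  haveI : BaireSpace G := baireG (X := X)
  intro A hA hinv
  have hmem : ∀ (g : G) (z : X), z ∈ A → g • z ∈ A := by
    intro g z hz
    have : g • z ∈ (g • ·) '' A := ⟨z, hz, rfl⟩
    rwa [hinv g] at this
  have hmem' : ∀ (g : G) (z : X), g • z ∈ A → z ∈ A := by
    intro g z hz
    have : g⁻¹ • (g • z) ∈ A := hmem g⁻¹ _ hz
    rwa [inv_smul_smul] at this
  have huniv : IsOpen (Set.univ : Set G) := isOpen_univ
  have hunine : (Set.univ : Set G).Nonempty := ⟨1, trivial⟩
  have main : ∀ z w : X, (∀ V : Set G, IsOpen V → V.Nonempty →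
      ∃ W : Set G, IsOpen W ∧ W.Nonempty ∧ HLe α w W z V) → z ∈ A → w ∈ A := by
    intro z w hzw hz
    obtain ⟨W, hWo, hWne, hle⟩ := hzw Set.univ huniv hunine
    have hzstar : z ∈ vaughtStar A (Set.univ : Set G) := by
      show IsMeagre _
      have : (Set.univ : Set G) \ {g : G | g • z ∈ A} = ∅ := by
        rw [Set.diff_eq_empty]
        intro g _
        exact hmem g z hz
      rw [this]; exact IsMeagre.empty
    have hwstar : w ∈ vaughtStar A W :=
      key_transfer α w z W (Set.univ : Set G) hWo hWne huniv hunine hle α le_rfl A hA hzstar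
    have : (W ∩ {g : G | g • w ∈ A}).Nonempty := by
      rcases Set.eq_empty_or_nonempty (W ∩ {g : G | g • w ∈ A}) with he | hne
      · exfalso
        refine open_not_isMeagre hWo hWne ((hwstar : IsMeagre _).mono (t := W) (s := W \ {g : G | g • w ∈ A}) fun g hg => ⟨hg, ?_⟩)
        intro hgw
        exact absurd (Set.eq_empty_iff_forall_notMem.1 he g ⟨hg, hgw⟩) (fun h => h)
      · exact hne
    obtain ⟨g, -, hg⟩ := this
    exact hmem' g w hg
  exact ⟨main x y h.1, main y x h.2⟩
end

section
/- If for each of x, y ∈ X, and each open nonempty V ⊆ G there is an open nonempty W with (y,W) ≤_α (x,V) and symmetrically, for every countable ordinal α (i.e., x ≡_α y for all α < ω₁), then x and y are in the same G-orbit. -/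
open Set

variable {G X : Type*}

section
variable [Group G] [TopologicalSpace G] [TopologicalSpace X] [MulAction G X]

theorem hle_of_le_one {α : Ordinal} (hα : α ≤ 1) {x₀ x₁ : X} {V₀ V₁ : Set G} :
    HLe α x₀ V₀ x₁ V₁ ↔ closure ((· • x₀) '' V₀) ⊆ closure ((· • x₁) '' V₁) := by
  rw [HLe.eq_def, if_pos hα]

theorem hle_succ {β : Ordinal} (hβ : 1 ≤ β) {x₀ x₁ : X} {V₀ V₁ : Set G} :
    HLe (β + 1) x₀ V₀ x₁ V₁ ↔
      ∀ W₀ : Set G, IsOpen W₀ → W₀.Nonempty → W₀ ⊆ V₀ →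
        ∃ W₁ : Set G, IsOpen W₁ ∧ W₁.Nonempty ∧ W₁ ⊆ V₁ ∧ HLe β x₁ W₁ x₀ W₀ := by
  rw [HLe.eq_def]
  have hb1 : β < β + 1 := by
    rw [Ordinal.add_one_eq_succ]; exact Order.lt_succ β
  rw [if_neg (not_le.mpr (lt_of_le_of_lt hβ hb1))]
  rw [dif_pos ⟨β, rfl⟩]
  generalize_proofs hp
  have hc : hp.choose = β := by
    refine Order.succ_injective ?_
    rw [← Ordinal.add_one_eq_succ, ← Ordinal.add_one_eq_succ]
    exact hp.choose_spec.symm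
  rw [hc]
end

section
variable [Group G] [TopologicalSpace G] [TopologicalSpace X] [MulAction G X]

theorem hle_else {α : Ordinal} (h1 : ¬ α ≤ 1) (h2 : ¬ ∃ β, α = β + 1)
    {x₀ x₁ : X} {V₀ V₁ : Set G} :
    HLe α x₀ V₀ x₁ V₁ ↔ ∀ β, 1 ≤ β → β < α → HLe β x₀ V₀ x₁ V₁ := by
  rw [HLe.eq_def, if_neg h1, dif_neg h2]

theorem hle_limit {α : Ordinal} (hα : Order.IsSuccLimit α) {x₀ x₁ : X} {V₀ V₁ : Set G} :
    HLe α x₀ V₀ x₁ V₁ ↔ ∀ β, 1 ≤ β → β < α → HLe β x₀ V₀ x₁ V₁ := by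
  refine hle_else ?_ ?_
  · exact not_le.mpr (lt_of_lt_of_le Ordinal.one_lt_omega0 (Ordinal.omega0_le_of_isSuccLimit hα))
  · rintro ⟨β, rfl⟩
    have := hα.succ_lt (show β < β + 1 by rw [Ordinal.add_one_eq_succ]; exact Order.lt_succ β)
    rw [Ordinal.add_one_eq_succ] at this
    exact absurd this (lt_irrefl _)

/-- `HLe` is antitone in the left-hand open set. -/
theorem hle_mono_left {α : Ordinal} {x₀ x₁ : X} {V₀ V₀' V₁ : Set G}
    (hsub : V₀' ⊆ V₀) (h : HLe α x₀ V₀ x₁ V₁) : HLe α x₀ V₀' x₁ V₁ := by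
  induction α using Ordinal.induction with
  | _ α IH =>
    rcases le_or_gt α 1 with hα | hα
    · rw [hle_of_le_one hα] at h ⊢
      exact subset_trans (closure_mono (Set.image_mono hsub)) h
    · by_cases hs : ∃ β, α = β + 1
      · obtain ⟨β, rfl⟩ := hs
        have hβ : 1 ≤ β := by
          rw [Ordinal.add_one_eq_succ] at hα
          exact Order.lt_succ_iff.mp hα
        rw [hle_succ hβ] at h ⊢
        intro W₀ hW₀o hW₀ne hW₀sub
        exact h W₀ hW₀o hW₀ne (hW₀sub.trans hsub)
      · rw [hle_else (not_le.mpr hα) hs] at h ⊢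
        intro β hβ1 hβα
        exact IH β hβα (h β hβ1 hβα)
end

theorem lt_omega1_add_one {β : Ordinal} (hβ : β < (Cardinal.aleph 1).ord) :
    β + 1 < (Cardinal.aleph 1).ord := by
  rw [Cardinal.lt_ord] at hβ ⊢
  rw [Ordinal.card_add, Ordinal.card_one]
  rw [← Cardinal.succ_aleph0, Order.lt_succ_iff] at hβ ⊢
  exact Cardinal.add_le_aleph0.mpr ⟨hβ, Cardinal.one_le_aleph0⟩

theorem lt_omega1_add_omega {β : Ordinal} (hβ : β < (Cardinal.aleph 1).ord) :
    β + Ordinal.omega0 < (Cardinal.aleph 1).ord := by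
  rw [Cardinal.lt_ord] at hβ ⊢
  rw [Ordinal.card_add, Ordinal.card_omega0]
  rw [← Cardinal.succ_aleph0, Order.lt_succ_iff] at hβ ⊢
  exact Cardinal.add_le_aleph0.mpr ⟨hβ, le_rfl⟩

theorem one_lt_omega1 : (1 : Ordinal) < (Cardinal.aleph 1).ord := by
  rw [Cardinal.lt_ord]
  simpa using lt_of_le_of_lt Cardinal.one_le_aleph0 Cardinal.aleph0_lt_aleph_one

section
universe u
variable [Group G] [TopologicalSpace G] [SecondCountableTopology G]
  [TopologicalSpace X] [MulAction G X]

/-- Pigeonhole: if at each countable level some open witness exists inside `C`, then a single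
open set inside `C` works for all countable levels simultaneously. -/
theorem hle_pigeon (a b : X) (V C : Set G)
    (hAll : ∀ α : Ordinal.{u}, 1 ≤ α → α < (Cardinal.aleph 1).ord →
      ∃ W : Set G, IsOpen W ∧ W.Nonempty ∧ W ⊆ C ∧ HLe α a W b V) :
    ∃ U : Set G, IsOpen U ∧ U.Nonempty ∧ U ⊆ C ∧
      ∀ β : Ordinal.{u}, 1 ≤ β → β < (Cardinal.aleph 1).ord → HLe β a U b V := by
  obtain ⟨B, hBc, hBne, hBbasis⟩ := TopologicalSpace.exists_countable_basis G
  have key : ∀ β : Ordinal, 1 ≤ β → β < (Cardinal.aleph 1).ord →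
      ∃ U ∈ B, U.Nonempty ∧ U ⊆ C ∧ ∀ γ, 1 ≤ γ → γ ≤ β → HLe γ a U b V := by
    intro β hβ1 hβω
    obtain ⟨W, hWo, hWne, hWC, hW⟩ := hAll (β + Ordinal.omega0)
      (le_trans hβ1 (le_self_add)) (lt_omega1_add_omega hβω)
    obtain ⟨w, hw⟩ := hWne
    obtain ⟨U, hUB, hwU, hUW⟩ := hBbasis.exists_subset_of_mem_open hw hWo
    have hle' : HLe (β + Ordinal.omega0) a U b V := hle_mono_left hUW hW
    have hlim := (hle_limit (Ordinal.isSuccLimit_add β Ordinal.isSuccLimit_omega0)).mp hle'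
    have hβlt : β < β + Ordinal.omega0 := lt_add_of_pos_right β Ordinal.omega0_pos
    exact ⟨U, hUB, ⟨w, hwU⟩, hUW.trans hWC,
      fun γ h1 h2 => hlim γ h1 (lt_of_le_of_lt h2 hβlt)⟩
  by_contra hcon
  push_neg at hcon
  set T : Set (Set G) := {U | U ∈ B ∧ U.Nonempty ∧ U ⊆ C} with hT
  have hTc : T.Countable := hBc.mono (fun U hU => hU.1)
  have hTne : T.Nonempty := by
    obtain ⟨U, hUB, hUne, hUC, _⟩ := key 1 le_rfl one_lt_omega1
    exact ⟨U, hUB, hUne, hUC⟩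
  obtain ⟨f, hf⟩ := hTc.exists_eq_range hTne
  have hfT : ∀ n, f n ∈ T := by intro n; rw [hf]; exact ⟨n, rfl⟩
  have hstep : ∀ n : ℕ, ∃ β : Ordinal, 1 ≤ β ∧ β < (Cardinal.aleph 1).ord ∧
      ¬ HLe β a (f n) b V := by
    intro n
    obtain ⟨hB', hne', hC'⟩ := hfT n
    exact hcon (f n) (hBbasis.isOpen hB') hne' hC'
  choose bβ hb1 hbω hbn using hstep
  have hsup : (⨆ n, bβ n) < (Cardinal.aleph 1).ord := by
    refine Ordinal.iSup_lt_ord_lift ?_ hbω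
    rw [Cardinal.mk_nat, Cardinal.lift_aleph0, Cardinal.isRegular_aleph_one.cof_eq]
    exact Cardinal.aleph0_lt_aleph_one
  obtain ⟨U, hUB, hUne, hUC, hU⟩ := key (⨆ n, bβ n)
    (le_trans (hb1 0) (le_ciSup (Ordinal.bddAbove_range bβ) 0)) hsup
  have : U ∈ T := ⟨hUB, hUne, hUC⟩
  rw [hf] at this
  obtain ⟨n, rfl⟩ := this
  exact hbn n (hU (bβ n) (hb1 n) (le_ciSup (Ordinal.bddAbove_range bβ) n))
end

section
universe u
variable [Group G] [TopologicalSpace G] [SecondCountableTopology G]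
  [TopologicalSpace X] [MulAction G X]

/-- `(a,V) ≤_β (b,W)` for every countable `β ≥ 1`. -/
def HGood (a : X) (V : Set G) (b : X) (W : Set G) : Prop :=
  ∀ β : Ordinal.{u}, 1 ≤ β → β < (Cardinal.aleph 1).ord → HLe β a V b W

theorem HGood.mono_left {a b : X} {V V' W : Set G} (hsub : V' ⊆ V)
    (h : HGood.{u} a V b W) : HGood.{u} a V' b W :=
  fun β h1 h2 => hle_mono_left hsub (h β h1 h2)

theorem HGood.closure_subset {a b : X} {V W : Set G} (h : HGood a V b W) :
    closure ((· • a) '' V) ⊆ closure ((· • b) '' W) :=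
  (hle_of_le_one le_rfl).mp (h 1 le_rfl one_lt_omega1)

theorem HGood.step {a b : X} {V W : Set G} (h : HGood.{u} a V b W)
    {S : Set G} (hSo : IsOpen S) (hSne : S.Nonempty) (hSV : S ⊆ V) :
    ∃ T : Set G, IsOpen T ∧ T.Nonempty ∧ T ⊆ W ∧ HGood.{u} b T a S := by
  refine hle_pigeon b a S W ?_
  intro α hα1 hαω
  have hsucc := h (α + 1) (le_trans hα1 (le_self_add)) (lt_omega1_add_one hαω)
  rw [hle_succ hα1] at hsucc
  obtain ⟨T, hTo, hTne, hTW, hT⟩ := hsucc S hSo hSne hSV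
  exact ⟨T, hTo, hTne, hTW, hT⟩
end

theorem shrink_lemma {H : Type*} [MetricSpace H] {W : Set H} (hWo : IsOpen W)
    (hWne : W.Nonempty) {ε : ℝ} (hε : 0 < ε) :
    ∃ S : Set H, IsOpen S ∧ S.Nonempty ∧ closure S ⊆ W ∧ ∃ c, S ⊆ Metric.ball c ε := by
  obtain ⟨p, hp⟩ := hWne
  obtain ⟨r, hr, hball⟩ := Metric.isOpen_iff.mp hWo p hp
  set s := min (r / 2) (ε / 2) with hs
  have hs0 : 0 < s := lt_min (half_pos hr) (half_pos hε)
  refine ⟨Metric.ball p s, Metric.isOpen_ball, ⟨p, Metric.mem_ball_self hs0⟩, ?_, p, ?_⟩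
  · refine subset_trans Metric.closure_ball_subset_closedBall ?_
    refine subset_trans (Metric.closedBall_subset_ball ?_) hball
    exact lt_of_le_of_lt (min_le_left _ _) (half_lt_self hr)
  · exact Metric.ball_subset_ball (le_trans (min_le_right _ _) (le_of_lt (half_lt_self hε)))

theorem cauchy_limit {H : Type*} [MetricSpace H] [CompleteSpace H] (A : ℕ → Set H)
    (hne : ∀ n, (A n).Nonempty) (hmono : ∀ n, A (n + 1) ⊆ A n)
    (hball : ∀ n, ∃ c, A (n + 1) ⊆ Metric.ball c ((1 / 2) ^ n)) :
    ∃ g : H, ∀ n, g ∈ closure (A n) := by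
  have hchain : ∀ m n : ℕ, n ≤ m → A m ⊆ A n := by
    intro m n hnm
    induction hnm with
    | refl => exact subset_rfl
    | step h ih => exact subset_trans (hmono _) ih
  choose uu hu using hne
  have hcauchy : CauchySeq uu := by
    rw [Metric.cauchySeq_iff]
    intro ε hε
    obtain ⟨k, hk⟩ := exists_pow_lt_of_lt_one (half_pos hε) (by norm_num : (1 / 2 : ℝ) < 1)
    obtain ⟨c, hc⟩ := hball k
    refine ⟨k + 1, fun m hm n hn => ?_⟩
    have hmc : uu m ∈ Metric.ball c ((1 / 2) ^ k) := hc (hchain m (k + 1) hm (hu m))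
    have hnc : uu n ∈ Metric.ball c ((1 / 2) ^ k) := hc (hchain n (k + 1) hn (hu n))
    calc dist (uu m) (uu n) ≤ dist (uu m) c + dist (uu n) c := dist_triangle_right _ _ _
      _ < (1 / 2) ^ k + (1 / 2) ^ k := add_lt_add hmc hnc
      _ < ε / 2 + ε / 2 := add_lt_add hk hk
      _ = ε := add_halves ε
  obtain ⟨g, hg⟩ := cauchySeq_tendsto_of_complete hcauchy
  refine ⟨g, fun n => ?_⟩
  refine mem_closure_of_tendsto hg ?_
  filter_upwards [Filter.eventually_ge_atTop n] with m hm
  exact hchain m n hm (hu m)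

theorem stmt9 [Group G] [TopologicalSpace G] [IsTopologicalGroup G] [PolishSpace G]
    [TopologicalSpace X] [PolishSpace X] [MulAction G X] [ContinuousSMul G X]
    (x y : X)
    (h : ∀ α : Ordinal, 1 ≤ α → α < (Cardinal.aleph 1).ord → HEquiv (G := G) α x y) :
    ∃ g : G, g • x = y := by
  letI := TopologicalSpace.upgradeIsCompletelyMetrizable G
  letI := TopologicalSpace.upgradeIsCompletelyMetrizable X
  -- initial application of the pigeonhole lemma
  have hAll0 : ∀ α : Ordinal, 1 ≤ α → α < (Cardinal.aleph 1).ord →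
      ∃ W : Set G, IsOpen W ∧ W.Nonempty ∧ W ⊆ (univ : Set G) ∧ HLe α y W x univ := by
    intro α h1 h2
    obtain ⟨W, hWo, hWne, hW⟩ := (h α h1 h2).1 univ isOpen_univ ⟨1, trivial⟩
    exact ⟨W, hWo, hWne, subset_univ _, hW⟩
  obtain ⟨U₀, hU₀o, hU₀ne, -, hU₀⟩ := hle_pigeon y x univ univ hAll0
  have hU₀' : HGood y U₀ x univ := hU₀
  -- the invariant of the construction
  set Inv : Set G × Set G → Prop := fun p =>
    IsOpen p.1 ∧ p.1.Nonempty ∧ IsOpen p.2 ∧ p.2.Nonempty ∧ HGood y p.2 x p.1 with hInvDef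
  have hstep : ∀ p : Set G × Set G, Inv p → ∀ n : ℕ, ∃ q : Set G × Set G, Inv q ∧
      closure q.1 ⊆ p.1 ∧ closure q.2 ⊆ p.2 ∧
      (∃ c, q.1 ⊆ Metric.ball c ((1 / 2 : ℝ) ^ n)) ∧
      (∃ c, q.2 ⊆ Metric.ball c ((1 / 2 : ℝ) ^ n)) ∧
      closure ((· • y) '' q.2) ⊆ closure ((· • x) '' q.1) ∧
      closure ((· • x) '' q.1) ⊆ closure ((· • y) '' p.2) := by
    rintro ⟨V, W⟩ ⟨hVo, hVne, hWo, hWne, hG⟩ n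
    have hpow : (0 : ℝ) < (1 / 2) ^ n := by positivity
    obtain ⟨S, hSo, hSne, hSW, c, hSc⟩ := shrink_lemma hWo hWne hpow
    have hSsubW : S ⊆ W := subset_closure.trans hSW
    obtain ⟨T, hTo, hTne, hTV, hGT⟩ := hG.step hSo hSne hSsubW
    obtain ⟨V', hV'o, hV'ne, hV'T, c', hV'c⟩ := shrink_lemma hTo hTne hpow
    have hGV' : HGood x V' y S := hGT.mono_left (subset_closure.trans hV'T)
    obtain ⟨W', hW'o, hW'ne, hW'S, hGW'⟩ := hGV'.step hV'o hV'ne subset_rfl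
    refine ⟨(V', W'), ⟨hV'o, hV'ne, hW'o, hW'ne, hGW'⟩, ?_, ?_, ⟨c', hV'c⟩, ⟨c, fun z hz => hSc (hW'S hz)⟩, ?_, ?_⟩
    · exact hV'T.trans hTV
    · exact (closure_mono hW'S).trans hSW
    · exact hGW'.closure_subset
    · exact hGV'.closure_subset.trans (closure_mono (Set.image_mono hSsubW))
  -- build the sequence
  have hstep' : ∀ (p : {p : Set G × Set G // Inv p}) (n : ℕ),
      ∃ q : {p : Set G × Set G // Inv p},
      closure q.1.1 ⊆ p.1.1 ∧ closure q.1.2 ⊆ p.1.2 ∧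
      (∃ c, q.1.1 ⊆ Metric.ball c ((1 / 2 : ℝ) ^ n)) ∧
      (∃ c, q.1.2 ⊆ Metric.ball c ((1 / 2 : ℝ) ^ n)) ∧
      closure ((· • y) '' q.1.2) ⊆ closure ((· • x) '' q.1.1) ∧
      closure ((· • x) '' q.1.1) ⊆ closure ((· • y) '' p.1.2) := by
    intro p n
    obtain ⟨q, hq, h1, h2, h3, h4, h5, h6⟩ := hstep p.1 p.2 n
    exact ⟨⟨q, hq⟩, h1, h2, h3, h4, h5, h6⟩
  choose nxt hnxt using hstep'
  have hInv0 : Inv (univ, U₀) := ⟨isOpen_univ, ⟨1, trivial⟩, hU₀o, hU₀ne, hU₀'⟩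
  set seq : ℕ → {p : Set G × Set G // Inv p} :=
    fun n => Nat.rec ⟨(univ, U₀), hInv0⟩ (fun k ih => nxt ih k) n with hseqDef
  have hlink : ∀ n : ℕ,
      closure (seq (n+1)).1.1 ⊆ (seq n).1.1 ∧ closure (seq (n+1)).1.2 ⊆ (seq n).1.2 ∧
      (∃ c, (seq (n+1)).1.1 ⊆ Metric.ball c ((1 / 2 : ℝ) ^ n)) ∧
      (∃ c, (seq (n+1)).1.2 ⊆ Metric.ball c ((1 / 2 : ℝ) ^ n)) ∧
      closure ((· • y) '' (seq (n+1)).1.2) ⊆ closure ((· • x) '' (seq (n+1)).1.1) ∧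
      closure ((· • x) '' (seq (n+1)).1.1) ⊆ closure ((· • y) '' (seq n).1.2) :=
    fun n => hnxt (seq n) n
  set Vs : ℕ → Set G := fun n => (seq n).1.1 with hVsDef
  set Ws : ℕ → Set G := fun n => (seq n).1.2 with hWsDef
  have hVne : ∀ n, (Vs n).Nonempty := fun n => (seq n).2.2.1
  have hWne : ∀ n, (Ws n).Nonempty := fun n => (seq n).2.2.2.2.1
  -- limits
  obtain ⟨gg, hgg⟩ := cauchy_limit Vs hVne
    (fun n => subset_closure.trans (hlink n).1) (fun n => (hlink n).2.2.1)
  obtain ⟨kk, hkk⟩ := cauchy_limit Ws hWne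
    (fun n => subset_closure.trans (hlink n).2.1) (fun n => (hlink n).2.2.2.1)
  have hxcont : Continuous (fun g' : G => g' • x) := continuous_id.smul continuous_const
  have hycont : Continuous (fun g' : G => g' • y) := continuous_id.smul continuous_const
  have key : ∀ ε : ℝ, 0 < ε → dist (kk • y) (gg • x) ≤ ε := by
    intro ε hε
    have hca : ContinuousAt (fun g' : G => g' • x) gg := hxcont.continuousAt
    rw [Metric.continuousAt_iff] at hca
    obtain ⟨δ, hδ, hδ'⟩ := hca ε hε
    obtain ⟨k, hk⟩ := exists_pow_lt_of_lt_one (half_pos hδ) (by norm_num : (1 / 2 : ℝ) < 1)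
    obtain ⟨c, hc⟩ := (hlink k).2.2.1
    have hgc : dist gg c ≤ (1 / 2) ^ k := by
      have h1 : gg ∈ closure (Metric.ball c ((1 / 2 : ℝ) ^ k)) :=
        closure_mono hc (hgg (k + 1))
      exact Metric.mem_closedBall.mp (Metric.closure_ball_subset_closedBall h1)
    have himg : (· • x) '' Vs (k + 1) ⊆ Metric.ball (gg • x) ε := by
      rintro _ ⟨v, hv, rfl⟩
      apply hδ'
      have h1 : dist v c < (1 / 2) ^ k := Metric.mem_ball.mp (hc hv)
      calc dist v gg ≤ dist v c + dist c gg := dist_triangle v c gg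
        _ ≤ (1 / 2) ^ k + (1 / 2) ^ k := by
            rw [dist_comm c gg]; exact add_le_add h1.le hgc
        _ < δ / 2 + δ / 2 := add_lt_add hk hk
        _ = δ := add_halves δ
    have hclosed : closure ((· • x) '' Vs (k + 1)) ⊆ Metric.closedBall (gg • x) ε :=
      closure_minimal (himg.trans Metric.ball_subset_closedBall) Metric.isClosed_closedBall
    have hky : kk • y ∈ closure ((· • y) '' Ws (k + 1)) :=
      image_closure_subset_closure_image hycont ⟨kk, hkk (k + 1), rfl⟩
    exact Metric.mem_closedBall.mp (hclosed ((hlink k).2.2.2.2.1 hky))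
  have heq : kk • y = gg • x := eq_of_forall_dist_le key
  exact ⟨kk⁻¹ * gg, by rw [mul_smul, ← heq, inv_smul_smul]⟩
end

section
/- Fix a countable basis 𝔅₀ = ⟨V_k⟩ of nonempty open subsets of G. For every countable ordinal α, the set R_α = {(x₀,x₁,n,m) : (x₀,V_m) ≤_α (x₁,V_n)} is Borel in X × X × ω × ω; in fact there is k(α) < ω with R_α in Π⁰_{α+k(α)}. -/
open Set

variable {G X : Type*}

section Pi0Lemmas
variable {Y Z : Type*} [TopologicalSpace Y] [TopologicalSpace Z]

lemma Pi0_le_one {α : Ordinal} (h : α ≤ 1) : Pi0 (Y := Y) α = {A | IsClosed A} := by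
  rw [Pi0, if_pos h]

lemma Pi0_gt_one {α : Ordinal} (h : ¬ α ≤ 1) :
    Pi0 (Y := Y) α = {A | ∃ f : ℕ → Set Y,
      (∀ n, ∃ β, ∃ _ : 1 ≤ β, ∃ _ : β < α, f n ∈ Pi0 β) ∧ A = ⋂ n, (f n)ᶜ} := by
  rw [Pi0, if_neg h]

lemma not_succ_le_one {γ : Ordinal} (hγ : 1 ≤ γ) : ¬ (γ + 1 ≤ 1) := by
  intro h
  have h1 : γ < γ + 1 := by
    rw [Ordinal.add_one_eq_succ]; exact Order.lt_succ γ
  exact absurd (lt_of_le_of_lt hγ (lt_of_lt_of_le h1 h)) (lt_irrefl 1)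

lemma Pi0_preimage : ∀ (α : Ordinal) {Y Z : Type*} [TopologicalSpace Y] [TopologicalSpace Z]
    (f : Z → Y), Continuous f → ∀ A ∈ Pi0 (Y := Y) α, f ⁻¹' A ∈ Pi0 (Y := Z) α := by
  intro α
  induction α using Ordinal.induction with
  | _ α IH =>
    intro Y Z _ _ f hf A hA
    by_cases h1 : α ≤ 1
    · rw [Pi0_le_one h1] at hA ⊢
      exact hA.preimage hf
    · rw [Pi0_gt_one h1] at hA ⊢
      obtain ⟨g, hg, rfl⟩ := hA
      refine ⟨fun n => f ⁻¹' g n, fun n => ?_, by simp [preimage_iInter]⟩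
      obtain ⟨β, hβ1, hβα, hmem⟩ := hg n
      exact ⟨β, hβ1, hβα, IH β hβα f hf _ hmem⟩

lemma mem_Pi0_of_isGδ [TopologicalSpace.MetrizableSpace Y] {α : Ordinal} (h1 : ¬ α ≤ 1)
    {A : Set Y} (hA : IsGδ A) : A ∈ Pi0 α := by
  obtain ⟨g, hgo, rfl⟩ : ∃ g : ℕ → Set Y, (∀ n, IsOpen (g n)) ∧ A = ⋂ n, g n := by
    rcases hA with ⟨T, hTo, hTc, rfl⟩
    rcases T.eq_empty_or_nonempty with rfl | hTne
    · exact ⟨fun _ => univ, fun _ => isOpen_univ, by simp⟩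
    · obtain ⟨g, rfl⟩ := hTc.exists_eq_range hTne
      exact ⟨g, fun n => hTo _ ⟨n, rfl⟩, by rw [sInter_range]⟩
  rw [Pi0_gt_one h1]
  refine ⟨fun n => (g n)ᶜ, fun n => ⟨1, le_refl 1, not_le.mp h1, ?_⟩, by simp⟩
  rw [Pi0_le_one le_rfl]
  exact (hgo n).isClosed_compl

lemma Pi0_mono [TopologicalSpace.MetrizableSpace Y] {α δ : Ordinal} (hαδ : α ≤ δ) (hα : 1 ≤ α)
    {A : Set Y} (hA : A ∈ Pi0 α) : A ∈ Pi0 δ := by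
  by_cases hδ : δ ≤ 1
  · have : α = 1 := le_antisymm (hαδ.trans hδ) hα
    have : α = δ := le_antisymm hαδ (hδ.trans (this ▸ le_rfl))
    rwa [← this]
  · by_cases h1 : α ≤ 1
    · rw [Pi0_le_one h1] at hA
      letI := TopologicalSpace.metrizableSpaceMetric Y
      exact mem_Pi0_of_isGδ hδ hA.isGδ
    · rw [Pi0_gt_one h1] at hA
      rw [Pi0_gt_one hδ]
      obtain ⟨f, hf, rfl⟩ := hA
      refine ⟨f, fun n => ?_, rfl⟩
      obtain ⟨β, hβ1, hβα, hm⟩ := hf n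
      exact ⟨β, hβ1, lt_of_lt_of_le hβα hαδ, hm⟩

lemma Pi0_iInter {α : Ordinal} (h1 : ¬ α ≤ 1) {A : ℕ → Set Y}
    (hA : ∀ n, A n ∈ Pi0 α) : (⋂ n, A n) ∈ Pi0 α := by
  have hrep : ∀ n, ∃ f : ℕ → Set Y,
      (∀ m, ∃ β, ∃ _ : 1 ≤ β, ∃ _ : β < α, f m ∈ Pi0 β) ∧ A n = ⋂ m, (f m)ᶜ := by
    intro n; have := hA n; rwa [Pi0_gt_one h1] at this
  choose f hf hAf using hrep
  let e : ℕ ≃ ℕ × ℕ := Denumerable.eqv (ℕ × ℕ) |>.symm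
  rw [Pi0_gt_one h1]
  refine ⟨fun k => f (e k).1 (e k).2, fun k => hf _ _, ?_⟩
  ext x
  simp only [mem_iInter, mem_compl_iff]
  constructor
  · intro h k
    have := h (e k).1
    rw [hAf] at this
    simpa using mem_iInter.mp this (e k).2
  · intro h n
    rw [hAf]
    refine mem_iInter.mpr fun m => ?_
    have := h (e.symm (n, m))
    simpa [e] using this

lemma Pi0_clopen_aux : ∀ (α : Ordinal), 1 ≤ α → ∀ {C A : Set Y}, IsClopen C → A ∈ Pi0 α →
    (C ∪ A ∈ Pi0 (Y := Y) α ∧ C ∩ A ∈ Pi0 (Y := Y) α) := by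
  intro α
  induction α using Ordinal.induction with
  | _ α IH =>
    intro hα C A hC hA
    by_cases h1 : α ≤ 1
    · rw [Pi0_le_one h1] at hA ⊢
      exact ⟨hC.isClosed.union hA, hC.isClosed.inter hA⟩
    · rw [Pi0_gt_one h1] at hA
      obtain ⟨f, hf, rfl⟩ := hA
      constructor
      · rw [Pi0_gt_one h1]
        refine ⟨fun n => Cᶜ ∩ f n, fun n => ?_, ?_⟩
        · obtain ⟨β, hβ1, hβα, hm⟩ := hf n
          exact ⟨β, hβ1, hβα, (IH β hβα hβ1 hC.compl hm).2⟩
        · ext x; by_cases hx : x ∈ C <;> simp [hx]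
      · rw [Pi0_gt_one h1]
        refine ⟨fun n => Cᶜ ∪ f n, fun n => ?_, ?_⟩
        · obtain ⟨β, hβ1, hβα, hm⟩ := hf n
          exact ⟨β, hβ1, hβα, (IH β hβα hβ1 hC.compl hm).1⟩
        · ext x; by_cases hx : x ∈ C <;> simp [hx]

lemma Pi0_compl {α : Ordinal} (hα : 1 ≤ α) {A : Set Y} (hA : A ∈ Pi0 α) :
    Aᶜ ∈ Pi0 (Y := Y) (α + 1) := by
  rw [Pi0_gt_one (not_succ_le_one hα)]
  refine ⟨fun _ => A, fun n => ⟨α, hα, by rw [Ordinal.add_one_eq_succ]; exact Order.lt_succ α, hA⟩, (iInter_const _).symm⟩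

lemma Pi0_measurableSet [MeasurableSpace Y] [BorelSpace Y] :
    ∀ (α : Ordinal) {A : Set Y}, A ∈ Pi0 α → MeasurableSet A := by
  intro α
  induction α using Ordinal.induction with
  | _ α IH =>
    intro A hA
    by_cases h1 : α ≤ 1
    · rw [Pi0_le_one h1] at hA
      exact hA.measurableSet
    · rw [Pi0_gt_one h1] at hA
      obtain ⟨f, hf, rfl⟩ := hA
      refine MeasurableSet.iInter fun n => ?_
      obtain ⟨β, hβ1, hβα, hm⟩ := hf n
      exact (IH β hβα hm).compl

end Pi0Lemmas


section HLeLemmas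
variable [Group G] [TopologicalSpace G] [TopologicalSpace X] [MulAction G X]
variable {x₀ x₁ : X} {V₀ V₁ : Set G}

lemma HLe_one_iff_s10 {α : Ordinal} (h : α ≤ 1) :
    HLe α x₀ V₀ x₁ V₁ ↔ closure ((· • x₀) '' V₀) ⊆ closure ((· • x₁) '' V₁) := by
  rw [HLe, if_pos h]

lemma not_succ_le_one' {γ : Ordinal} (hγ : 1 ≤ γ) : ¬ (γ + 1 ≤ 1) := by
  intro h
  have h1 : γ < γ + 1 := by rw [Ordinal.add_one_eq_succ]; exact Order.lt_succ γ
  exact absurd (lt_of_le_of_lt hγ (lt_of_lt_of_le h1 h)) (lt_irrefl 1)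

lemma HLe_succ_iff {β : Ordinal} (hβ : 1 ≤ β) :
    HLe (β + 1) x₀ V₀ x₁ V₁ ↔ ∀ W₀ : Set G, IsOpen W₀ → W₀.Nonempty → W₀ ⊆ V₀ →
      ∃ W₁ : Set G, IsOpen W₁ ∧ W₁.Nonempty ∧ W₁ ⊆ V₁ ∧ HLe β x₁ W₁ x₀ W₀ := by
  have hex : ∃ γ, β + 1 = γ + 1 := ⟨β, rfl⟩
  have hch : hex.choose = β := by
    have hs : Order.succ β = Order.succ hex.choose := by
      simpa only [Ordinal.add_one_eq_succ] using hex.choose_spec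
    exact (Order.succ_injective hs).symm
  rw [HLe, if_neg (not_succ_le_one' hβ), dif_pos hex, hch]

lemma HLe_limit_iff {α : Ordinal} (h1 : ¬ α ≤ 1) (h2 : ¬ ∃ β, α = β + 1) :
    HLe α x₀ V₀ x₁ V₁ ↔ ∀ β, 1 ≤ β → β < α → HLe β x₀ V₀ x₁ V₁ := by
  rw [HLe, if_neg h1, dif_neg h2]

lemma one_le_of_succ_gt_one {α β : Ordinal} (h1 : ¬ α ≤ 1) (h : α = β + 1) : 1 ≤ β := by
  rcases eq_or_ne β 0 with rfl | hne
  · exact absurd (le_of_eq (by rw [h, zero_add])) h1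
  · exact Ordinal.one_le_iff_ne_zero.mpr hne

lemma HLe_mono : ∀ (α : Ordinal) {x₀ x₁ : X} {V₀ V₁ V₀' V₁' : Set G}, V₀' ⊆ V₀ → V₁ ⊆ V₁' →
    HLe α x₀ V₀ x₁ V₁ → HLe α x₀ V₀' x₁ V₁' := by
  intro α
  induction α using Ordinal.induction with
  | _ α IH =>
    intro x₀ x₁ V₀ V₁ V₀' V₁' h₀ h₁ h
    by_cases hle : α ≤ 1
    · rw [HLe_one_iff_s10 hle] at h ⊢
      exact le_trans (closure_mono (image_mono h₀)) (le_trans h (closure_mono (image_mono h₁)))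
    · by_cases hsucc : ∃ β, α = β + 1
      · obtain ⟨β, rfl⟩ := hsucc
        have hβ : 1 ≤ β := one_le_of_succ_gt_one hle rfl
        rw [HLe_succ_iff hβ] at h ⊢
        intro W₀ hWo hWne hW₀
        obtain ⟨W₁, hW₁o, hW₁ne, hW₁sub, hW₁⟩ := h W₀ hWo hWne (hW₀.trans h₀)
        exact ⟨W₁, hW₁o, hW₁ne, hW₁sub.trans h₁, hW₁⟩
      · rw [HLe_limit_iff hle hsucc] at h ⊢
        intro β hβ1 hβα
        exact IH β hβα h₀ h₁ (h β hβ1 hβα)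

end HLeLemmas

section Basis
variable [Group G] [TopologicalSpace G] [TopologicalSpace X] [MulAction G X]
variable (V : ℕ → Set G) (hB : TopologicalSpace.IsTopologicalBasis (Set.range V))
    (hBne : ∀ k, (V k).Nonempty)

include hB hBne in
lemma HLe_succ_basis {β : Ordinal} (hβ : 1 ≤ β) {x₀ x₁ : X} {m n : ℕ} :
    HLe (β + 1) x₀ (V m) x₁ (V n) ↔
      ∀ j : ℕ, V j ⊆ V m → ∃ i : ℕ, V i ⊆ V n ∧ HLe β x₁ (V i) x₀ (V j) := by
  have hVo : ∀ k, IsOpen (V k) := fun k => hB.isOpen ⟨k, rfl⟩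
  rw [HLe_succ_iff hβ]
  constructor
  · intro h j hj
    obtain ⟨W₁, hW₁o, hW₁ne, hW₁sub, hW₁⟩ := h (V j) (hVo j) (hBne j) hj
    obtain ⟨y, hy⟩ := hW₁ne
    obtain ⟨_, ⟨i, rfl⟩, hyi, hisub⟩ := hB.exists_subset_of_mem_open hy hW₁o
    exact ⟨i, hisub.trans hW₁sub, HLe_mono β hisub (subset_refl _) hW₁⟩
  · intro h W₀ hWo hWne hW₀
    obtain ⟨y, hy⟩ := hWne
    obtain ⟨_, ⟨j, rfl⟩, hyj, hjsub⟩ := hB.exists_subset_of_mem_open hy hWo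
    obtain ⟨i, hisub, hi⟩ := h j (hjsub.trans hW₀)
    exact ⟨V i, hVo i, hBne i, hisub, HLe_mono β (subset_refl _) hjsub hi⟩

end Basis

section Base
variable [Group G] [TopologicalSpace G] [IsTopologicalGroup G] [PolishSpace G]
variable [TopologicalSpace X] [PolishSpace X] [MulAction G X] [ContinuousSMul G X]

/-- countable characterization of the base case. -/
lemma closure_smul_subset_iff (D : ℕ → G) (hD : DenseRange D)
    (U : ℕ → Set X) (hUo : ∀ u, IsOpen (U u))
    (hU : ∀ (x : X) (O : Set X), IsOpen O → x ∈ O → ∃ u, x ∈ U u ∧ U u ⊆ O)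
    (x₀ x₁ : X) {V₀ V₁ : Set G} (hV₀ : IsOpen V₀) :
    closure ((· • x₀) '' V₀) ⊆ closure ((· • x₁) '' V₁) ↔
      ∀ d u : ℕ, (D d ∈ V₀ ∧ D d • x₀ ∈ U u) → ∃ k ∈ V₁, k • x₁ ∈ U u := by
  constructor
  · intro h d u ⟨hd, hdu⟩
    have hmem : D d • x₀ ∈ closure ((· • x₁) '' V₁) :=
      h (subset_closure ⟨D d, hd, rfl⟩)
    obtain ⟨y, hyU, k, hkV, rfl⟩ := mem_closure_iff.mp hmem (U u) (hUo u) hdu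
    exact ⟨k, hkV, hyU⟩
  · intro h
    apply closure_minimal _ isClosed_closure
    rintro _ ⟨g, hg, rfl⟩
    rw [mem_closure_iff]
    intro O hO hgO
    obtain ⟨u, hgu, hsub⟩ := hU _ O hO hgO
    have hQo : IsOpen (V₀ ∩ (· • x₀) ⁻¹' U u) :=
      hV₀.inter ((hUo u).preimage (continuous_id.smul continuous_const))
    obtain ⟨d, hd⟩ := hD.exists_mem_open hQo ⟨g, hg, hgu⟩
    obtain ⟨k, hkV, hkU⟩ := h d u ⟨hd.1, hd.2⟩
    exact ⟨k • x₁, hsub hkU, k, hkV, rfl⟩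

end Base


section MainAux
open TopologicalSpace

variable {X : Type*} [TopologicalSpace X]

lemma isClopen_fiber4 {m' : ℕ} (Q : Prop) :
    IsClopen {p : X × X × ℕ × ℕ | p.2.2.2 = m' ∧ Q} := by
  by_cases hQ : Q
  · have : {p : X × X × ℕ × ℕ | p.2.2.2 = m' ∧ Q} =
        (fun p : X × X × ℕ × ℕ => p.2.2.2) ⁻¹' {m'} := by ext p; simp [hQ]
    rw [this]
    exact (isClopen_discrete {m'}).preimage (by fun_prop)
  · have : {p : X × X × ℕ × ℕ | p.2.2.2 = m' ∧ Q} = ∅ := by ext p; simp [hQ]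
    rw [this]; exact isClopen_empty

lemma isClopen_fiber3 {n' : ℕ} (Q : Prop) :
    IsClopen {p : X × X × ℕ × ℕ | p.2.2.1 = n' ∧ Q} := by
  by_cases hQ : Q
  · have : {p : X × X × ℕ × ℕ | p.2.2.1 = n' ∧ Q} =
        (fun p : X × X × ℕ × ℕ => p.2.2.1) ⁻¹' {n'} := by ext p; simp [hQ]
    rw [this]
    exact (isClopen_discrete {n'}).preimage (by fun_prop)
  · have : {p : X × X × ℕ × ℕ | p.2.2.1 = n' ∧ Q} = ∅ := by ext p; simp [hQ]
    rw [this]; exact isClopen_empty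

variable {G : Type*} [Group G] [TopologicalSpace G] [MulAction G X] [ContinuousSMul G X]

lemma isOpen_existsSmul (V : ℕ → Set G) (U : Set X) (hU : IsOpen U) :
    IsOpen {p : X × X × ℕ × ℕ | ∃ k ∈ V p.2.2.1, k • p.2.1 ∈ U} := by
  have : {p : X × X × ℕ × ℕ | ∃ k ∈ V p.2.2.1, k • p.2.1 ∈ U} =
      ⋃ n' : ℕ, ((fun p : X × X × ℕ × ℕ => p.2.2.1) ⁻¹' {n'} ∩
        (fun p : X × X × ℕ × ℕ => p.2.1) ⁻¹' {x | ∃ k ∈ V n', k • x ∈ U}) := by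
    ext p
    simp only [Set.mem_setOf_eq, Set.mem_iUnion, Set.mem_inter_iff, Set.mem_preimage,
      Set.mem_singleton_iff]
    constructor
    · rintro ⟨k, hk, hku⟩; exact ⟨p.2.2.1, rfl, k, hk, hku⟩
    · rintro ⟨n', rfl, k, hk, hku⟩; exact ⟨k, hk, hku⟩
  rw [this]
  refine isOpen_iUnion fun n' => (IsOpen.preimage (by fun_prop) (isOpen_discrete {n'})).inter
    (IsOpen.preimage (by fun_prop) ?_)
  have : {x : X | ∃ k ∈ V n', k • x ∈ U} = ⋃ k ∈ V n', (k • ·) ⁻¹' U := by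
    ext x; simp
  rw [this]
  exact isOpen_biUnion fun k _ => hU.preimage (continuous_const_smul k)

end MainAux


universe u
theorem countable_Iio_of_lt_aleph1 (α : Ordinal.{u}) (h : α < (Cardinal.aleph 1).ord) : (Set.Iio α).Countable := by
  rw [Cardinal.countable_iff_lt_aleph_one, Ordinal.mk_Iio_ordinal]
  exact Cardinal.lift_lt_aleph_one.2 (Cardinal.lt_ord.mp h)


lemma add_nat_lt_limit {γ β : Ordinal} (h : Order.IsSuccLimit γ) (hβ : β < γ) (k : ℕ) : β + (k:Ordinal) < γ := by
  induction k with
  | zero => simpa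
  | succ k ih =>
    have h2 : β + ((k+1:ℕ):Ordinal) = (β + (k:Ordinal)) + 1 := by
      rw [Ordinal.natCast_succ, ← Ordinal.add_one_eq_succ, ← add_assoc]
    rw [h2, Ordinal.add_one_eq_succ]
    exact h.succ_lt ih


theorem stmt10 [Group G] [TopologicalSpace G] [IsTopologicalGroup G] [PolishSpace G]
    [TopologicalSpace X] [PolishSpace X] [MulAction G X] [ContinuousSMul G X]
    [MeasurableSpace X] [BorelSpace X]
    (V : ℕ → Set G) (hB : TopologicalSpace.IsTopologicalBasis (Set.range V))
    (hBne : ∀ k, (V k).Nonempty)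
    (α : Ordinal) (hα1 : 1 ≤ α) (hα : α < (Cardinal.aleph 1).ord) :
    MeasurableSet {p : X × X × ℕ × ℕ | HLe α p.1 (V p.2.2.2) p.2.1 (V p.2.2.1)} ∧
      ∃ k : ℕ, {p : X × X × ℕ × ℕ | HLe α p.1 (V p.2.2.2) p.2.1 (V p.2.2.1)}
        ∈ Pi0 (α + k) := by
  classical
  have hVo : ∀ k, IsOpen (V k) := fun k => hB.isOpen ⟨k, rfl⟩
  obtain ⟨b, hbc, hbne, hbb⟩ := TopologicalSpace.exists_countable_basis X
  obtain ⟨U, hUr⟩ : ∃ U : ℕ → Set X, insert ∅ b = Set.range U :=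
    (hbc.insert ∅).exists_eq_range (Set.insert_nonempty _ _)
  have hUo : ∀ u, IsOpen (U u) := by
    intro u
    have hmem : U u ∈ insert ∅ b := hUr ▸ Set.mem_range_self u
    rcases Set.mem_insert_iff.mp hmem with h | h
    · rw [h]; exact isOpen_empty
    · exact hbb.isOpen h
  have hU : ∀ (x : X) (O : Set X), IsOpen O → x ∈ O → ∃ u, x ∈ U u ∧ U u ⊆ O := by
    intro x O hO hx
    obtain ⟨t, ht, hxt, htO⟩ := hbb.exists_subset_of_mem_open hx hO
    have : t ∈ Set.range U := hUr ▸ Set.mem_insert_of_mem _ ht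
    obtain ⟨u, rfl⟩ := this
    exact ⟨u, hxt, htO⟩
  have hD := TopologicalSpace.denseRange_denseSeq G
  set D := TopologicalSpace.denseSeq G with hDdef
  have key : ∀ γ : Ordinal, 1 ≤ γ → γ < (Cardinal.aleph 1).ord →
      ∃ k : ℕ, {p : X × X × ℕ × ℕ | HLe γ p.1 (V p.2.2.2) p.2.1 (V p.2.2.1)}
        ∈ Pi0 (γ + (k : Ordinal)) := by
    intro γ
    induction γ using Ordinal.induction with
    | _ γ IH =>
      intro hγ1 hγω
      by_cases hle : γ ≤ 1
      · -- base case : γ = 1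
        have hγeq : γ = 1 := le_antisymm hle hγ1
        subst hγeq
        refine ⟨1, ?_⟩
        have h2 : ¬ ((1 : Ordinal) + ((1:ℕ) : Ordinal) ≤ 1) := by
          rw [Nat.cast_one]; exact not_succ_le_one' le_rfl
        set e3 := (Denumerable.eqv (ℕ × ℕ × ℕ)).symm with he3
        set T : ℕ × ℕ × ℕ → Set (X × X × ℕ × ℕ) := fun t =>
          {p : X × X × ℕ × ℕ | p.2.2.2 = t.2.2 ∧ (D t.1 ∈ V t.2.2 ∧ D t.1 • p.1 ∈ U t.2.1)}ᶜ ∪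
            {p : X × X × ℕ × ℕ | ∃ k ∈ V p.2.2.1, k • p.2.1 ∈ U t.2.1} with hTdef
        have hAopen : ∀ t : ℕ × ℕ × ℕ, IsOpen
            {p : X × X × ℕ × ℕ | p.2.2.2 = t.2.2 ∧ (D t.1 ∈ V t.2.2 ∧ D t.1 • p.1 ∈ U t.2.1)} := by
          intro t
          have heq : {p : X × X × ℕ × ℕ |
                p.2.2.2 = t.2.2 ∧ (D t.1 ∈ V t.2.2 ∧ D t.1 • p.1 ∈ U t.2.1)} =
              {p : X × X × ℕ × ℕ | p.2.2.2 = t.2.2 ∧ D t.1 ∈ V t.2.2} ∩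
                (fun p : X × X × ℕ × ℕ => p.1) ⁻¹' ((D t.1 • ·) ⁻¹' U t.2.1) := by
            ext p; simp only [Set.mem_setOf_eq, Set.mem_inter_iff, Set.mem_preimage]; tauto
          rw [heq]
          exact (isClopen_fiber4 _).isOpen.inter
            (IsOpen.preimage (by fun_prop) ((hUo _).preimage (continuous_const_smul _)))
        have hT : ∀ t, T t ∈ Pi0 (Y := X × X × ℕ × ℕ) ((1 : Ordinal) + ((1:ℕ) : Ordinal)) := by
          intro t
          apply mem_Pi0_of_isGδ h2
          letI := TopologicalSpace.metrizableSpaceMetric (X × X × ℕ × ℕ)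
          exact IsGδ.union (hAopen t).isClosed_compl.isGδ
            (isOpen_existsSmul V (U t.2.1) (hUo _)).isGδ
        have hSeq : {p : X × X × ℕ × ℕ | HLe 1 p.1 (V p.2.2.2) p.2.1 (V p.2.2.1)} =
            ⋂ n : ℕ, T (e3 n) := by
          ext p
          rw [Set.mem_setOf_eq, HLe_one_iff_s10 le_rfl,
            closure_smul_subset_iff D hD U hUo hU p.1 p.2.1 (hVo _)]
          simp only [Set.mem_iInter]
          have hTmem : ∀ (t : ℕ × ℕ × ℕ), p ∈ T t ↔
              ((p.2.2.2 = t.2.2 ∧ D t.1 ∈ V t.2.2 ∧ D t.1 • p.1 ∈ U t.2.1) →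
                ∃ k ∈ V p.2.2.1, k • p.2.1 ∈ U t.2.1) := by
            intro t
            rw [hTdef]
            simp only [Set.mem_union, Set.mem_compl_iff, Set.mem_setOf_eq]
            tauto
          constructor
          · intro h n
            rw [hTmem]
            rintro ⟨heq, hd, hdu⟩
            exact h (e3 n).1 (e3 n).2.1 ⟨by rw [heq]; exact hd, hdu⟩
          · intro h d u hyp
            have hn := h (e3.symm (d, u, p.2.2.2))
            rw [hTmem, Equiv.apply_symm_apply] at hn
            exact hn ⟨rfl, hyp.1, hyp.2⟩
        rw [hSeq]
        exact Pi0_iInter h2 fun n => hT (e3 n)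
      · by_cases hsucc : ∃ β, γ = β + 1
        · -- successor case
          obtain ⟨β, rfl⟩ := hsucc
          have hβ1 : 1 ≤ β := one_le_of_succ_gt_one hle rfl
          have hβlt : β < β + 1 := by
            rw [Ordinal.add_one_eq_succ]; exact Order.lt_succ β
          obtain ⟨k, hk⟩ := IH β hβlt hβ1 (hβlt.trans hγω)
          have h1' : 1 ≤ β + (k : Ordinal) := hβ1.trans (le_self_add (a := β) (b := (k : Ordinal)))
          have h2' : ¬ (β + (k : Ordinal) + 1 ≤ 1) := not_succ_le_one' h1'
          have h1'' : 1 ≤ β + (k : Ordinal) + 1 := h1'.trans (le_self_add (b := (1 : Ordinal)))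
          have h2'' : ¬ (β + (k : Ordinal) + 1 + 1 ≤ 1) := not_succ_le_one' h1''
          have hltsucc : ∀ δ : Ordinal, δ < δ + 1 := fun δ => by
            rw [Ordinal.add_one_eq_succ]; exact Order.lt_succ δ
          set e2 := (Denumerable.eqv (ℕ × ℕ)).symm with he2
          set P : ℕ → ℕ → Set (X × X × ℕ × ℕ) := fun i j =>
            (fun p : X × X × ℕ × ℕ => (p.2.1, p.1, j, i)) ⁻¹'
              {p : X × X × ℕ × ℕ | HLe β p.1 (V p.2.2.2) p.2.1 (V p.2.2.1)} with hPdef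
          have hP : ∀ i j, P i j ∈ Pi0 (Y := X × X × ℕ × ℕ) (β + (k : Ordinal)) :=
            fun i j => Pi0_preimage _ _ (by fun_prop) _ hk
          have hPmem : ∀ i j (p : X × X × ℕ × ℕ),
              p ∈ P i j ↔ HLe β p.2.1 (V i) p.1 (V j) := fun i j p => Iff.rfl
          set g : ℕ × ℕ → ℕ × ℕ → Set (X × X × ℕ × ℕ) := fun c d =>
            {p : X × X × ℕ × ℕ | p.2.2.2 = c.1 ∧ V c.2 ⊆ V c.1}ᶜ ∪
              ({p : X × X × ℕ × ℕ | p.2.2.1 = d.1 ∧ V d.2 ⊆ V d.1} ∩ P d.2 c.2) with hgdef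
          have hg : ∀ c d, g c d ∈ Pi0 (Y := X × X × ℕ × ℕ) (β + (k : Ordinal)) := by
            intro c d
            have hFP := (Pi0_clopen_aux _ h1' (isClopen_fiber3 (n' := d.1) (V d.2 ⊆ V d.1)) (hP d.2 c.2)).2
            exact (Pi0_clopen_aux _ h1' (isClopen_fiber4 (m' := c.1) (V c.2 ⊆ V c.1)).compl hFP).1
          set f : ℕ × ℕ → Set (X × X × ℕ × ℕ) := fun c => ⋂ n : ℕ, (g c (e2 n))ᶜ with hfdef
          have hf : ∀ c, f c ∈ Pi0 (Y := X × X × ℕ × ℕ) (β + (k : Ordinal) + 1) := by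
            intro c
            rw [Pi0_gt_one h2']
            exact ⟨fun n => g c (e2 n), fun n => ⟨β + k, h1', hltsucc _, hg _ _⟩, rfl⟩
          have hSeq : {p : X × X × ℕ × ℕ | HLe (β + 1) p.1 (V p.2.2.2) p.2.1 (V p.2.2.1)} =
              ⋂ n : ℕ, (f (e2 n))ᶜ := by
            ext p
            rw [Set.mem_setOf_eq, HLe_succ_basis V hB hBne hβ1]
            simp only [Set.mem_iInter, Set.mem_compl_iff]
            have hnotf : ∀ c : ℕ × ℕ, p ∉ f c ↔ ∃ d : ℕ × ℕ, p ∈ g c d := by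
              intro c
              rw [hfdef]
              simp only [Set.mem_iInter, Set.mem_compl_iff, not_forall, not_not]
              constructor
              · rintro ⟨n, hn⟩; exact ⟨e2 n, hn⟩
              · rintro ⟨d, hd⟩; exact ⟨e2.symm d, by rwa [Equiv.apply_symm_apply]⟩
            have hmemg : ∀ (c d : ℕ × ℕ), p ∈ g c d ↔
                (¬ (p.2.2.2 = c.1 ∧ V c.2 ⊆ V c.1) ∨
                  ((p.2.2.1 = d.1 ∧ V d.2 ⊆ V d.1) ∧ HLe β p.2.1 (V d.2) p.1 (V c.2))) := by
              intro c d
              rw [hgdef]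
              simp only [Set.mem_union, Set.mem_compl_iff, Set.mem_inter_iff, Set.mem_setOf_eq]
              rfl
            constructor
            · intro h n
              rw [hnotf]
              set c := e2 n with hc
              by_cases hcc : p.2.2.2 = c.1 ∧ V c.2 ⊆ V c.1
              · have hsub : V c.2 ⊆ V p.2.2.2 := by rw [hcc.1]; exact hcc.2
                obtain ⟨i, hisub, hi⟩ := h c.2 hsub
                exact ⟨(p.2.2.1, i), (hmemg c _).mpr (Or.inr ⟨⟨rfl, hisub⟩, hi⟩)⟩
              · exact ⟨(0, 0), (hmemg c _).mpr (Or.inl hcc)⟩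
            · intro h j hj
              have hn := h (e2.symm (p.2.2.2, j))
              rw [hnotf, Equiv.apply_symm_apply] at hn
              obtain ⟨d, hd⟩ := hn
              rcases (hmemg _ _).mp hd with hleft | ⟨⟨heq, hdsub⟩, hHLe⟩
              · exact absurd ⟨rfl, hj⟩ hleft
              · exact ⟨d.2, by rw [heq]; exact hdsub, hHLe⟩
          refine ⟨k + 1, ?_⟩
          have harith : (β + 1) + ((k + 1 : ℕ) : Ordinal) = β + (k : Ordinal) + 1 + 1 := by
            simp only [add_assoc]
            congr 1
            norm_cast
            omega
          rw [harith, hSeq, Pi0_gt_one h2'']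
          exact ⟨fun n => f (e2 n), fun n => ⟨β + k + 1, h1'', hltsucc _, hf _⟩, rfl⟩
        · -- limit case
          have hlim : Order.IsSuccLimit γ := by
            rcases Ordinal.zero_or_succ_or_isSuccLimit γ with h0 | ⟨β, hβ⟩ | h
            · rw [h0] at hγ1; exact absurd hγ1 (by simp)
            · exact absurd ⟨β, by rw [← hβ, Ordinal.add_one_eq_succ]⟩ hsucc
            · exact h
          have hIc : {β : Ordinal | 1 ≤ β ∧ β < γ}.Countable :=
            (countable_Iio_of_lt_aleph1 γ hγω).mono fun β hβ => hβ.2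
          have hIne : {β : Ordinal | 1 ≤ β ∧ β < γ}.Nonempty := ⟨1, le_rfl, Ordinal.one_lt_of_isSuccLimit hlim⟩
          obtain ⟨e, he⟩ := hIc.exists_eq_range hIne
          have heprop : ∀ n, 1 ≤ e n ∧ e n < γ := fun n => by
            have : e n ∈ {β : Ordinal | 1 ≤ β ∧ β < γ} := he ▸ Set.mem_range_self n
            exact this
          choose k hkmem using fun n => IH (e n) (heprop n).2 (heprop n).1 ((heprop n).2.trans hγω)
          refine ⟨0, ?_⟩
          have hz : γ + ((0 : ℕ) : Ordinal) = γ := by simp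
          rw [hz, Pi0_gt_one hle]
          have h1n : ∀ n, 1 ≤ e n + (k n : Ordinal) :=
            fun n => (heprop n).1.trans le_self_add
          have hltsucc : ∀ δ : Ordinal, δ < δ + 1 := fun δ => by
            rw [Ordinal.add_one_eq_succ]; exact Order.lt_succ δ
          refine ⟨fun n => {p : X × X × ℕ × ℕ | HLe (e n) p.1 (V p.2.2.2) p.2.1 (V p.2.2.1)}ᶜ,
            fun n => ?_, ?_⟩
          · refine ⟨e n + (k n : Ordinal) + 1, (h1n n).trans le_self_add, ?_, ?_⟩
            · rw [Ordinal.add_one_eq_succ]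
              exact hlim.succ_lt (add_nat_lt_limit hlim (heprop n).2 (k n))
            · rw [Pi0_gt_one (not_succ_le_one' (h1n n))]
              exact ⟨fun _ => {p : X × X × ℕ × ℕ | HLe (e n) p.1 (V p.2.2.2) p.2.1 (V p.2.2.1)},
                fun _ => ⟨e n + (k n : Ordinal), h1n n, hltsucc _, hkmem n⟩,
                (Set.iInter_const _).symm⟩
          · ext p
            simp only [Set.mem_iInter, Set.mem_compl_iff, Set.mem_setOf_eq, compl_compl, not_not]
            rw [HLe_limit_iff hle hsucc]
            constructor
            · intro h n
              exact h (e n) (heprop n).1 (heprop n).2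
            · intro h β hβ1 hβγ
              have : β ∈ Set.range e := he ▸ Set.mem_setOf_eq ▸ (⟨hβ1, hβγ⟩ : 1 ≤ β ∧ β < γ)
              obtain ⟨n, rfl⟩ := this
              exact h n
  obtain ⟨k, hk⟩ := key α hα1 hα
  exact ⟨Pi0_measurableSet _ hk, k, hk⟩
end

section
/- The Hjorth rank is orbit-invariant: if x and y are in the same G-orbit, then δ(x) = δ(y). -/
open Set

variable {G X : Type*}

lemma hchoose_lt {α : Ordinal} (hs : ∃ β, α = β + 1) : hs.choose < α := by
  conv_rhs => rw [hs.choose_spec]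
  exact lt_of_lt_of_le (Order.lt_succ _) (le_of_eq (Ordinal.add_one_eq_succ _).symm)

lemma hle_mono [Group G] [TopologicalSpace G] [TopologicalSpace X] [MulAction G X]
    (α : Ordinal) : ∀ {x₀ x₁ : X} {V₀ V₀' V₁ V₁' : Set G}, V₀' ⊆ V₀ → V₁ ⊆ V₁' →
    HLe α x₀ V₀ x₁ V₁ → HLe α x₀ V₀' x₁ V₁' := by
  induction α using Ordinal.induction with
  | _ α IH =>
    intro x₀ x₁ V₀ V₀' V₁ V₁' h0 h1 h
    rw [HLe] at h ⊢
    split_ifs at h ⊢ with hα hs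
    · exact (closure_mono (image_mono h0)).trans
        (h.trans (closure_mono (image_mono h1)))
    · intro W₀ hW₀o hW₀ne hW₀s
      obtain ⟨W₁, hW₁o, hW₁ne, hW₁s, hle⟩ := h W₀ hW₀o hW₀ne (hW₀s.trans h0)
      exact ⟨W₁, hW₁o, hW₁ne, hW₁s.trans h1, hle⟩
    · exact fun β h1β hβα => IH β hβα h0 h1 (h β h1β hβα)

lemma image_mul_image_mul_inv [Group G] (g : G) (V : Set G) :
    (· * g⁻¹) '' ((· * g) '' V) = V := by
  simp only [Set.image_image, mul_inv_cancel_right, Set.image_id']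

lemma image_mul_inv_image_mul [Group G] (g : G) (V : Set G) :
    (· * g) '' ((· * g⁻¹) '' V) = V := by
  simp only [Set.image_image, inv_mul_cancel_right, Set.image_id']

lemma hle_smul [Group G] [TopologicalSpace G] [IsTopologicalGroup G]
    [TopologicalSpace X] [MulAction G X]
    (α : Ordinal) : ∀ (g : G) (x₀ x₁ : X) (V₀ V₁ : Set G),
    HLe α (g • x₀) V₀ (g • x₁) V₁ ↔ HLe α x₀ ((· * g) '' V₀) x₁ ((· * g) '' V₁) := by
  induction α using Ordinal.induction with
  | _ α IH =>
    intro g x₀ x₁ V₀ V₁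
    rw [HLe]; rw [HLe]
    split_ifs with hα hs
    · simp only [Set.image_image, mul_smul]
    · constructor
      · intro h W₀' hW₀o hW₀ne hW₀s
        obtain ⟨W₁, hW₁o, hW₁ne, hW₁s, hle⟩ := h ((· * g⁻¹) '' W₀')
          (isOpenMap_mul_right g⁻¹ _ hW₀o) (hW₀ne.image _)
          (by rw [← image_mul_image_mul_inv g V₀]; exact Set.image_mono hW₀s)
        refine ⟨(· * g) '' W₁, isOpenMap_mul_right g _ hW₁o, hW₁ne.image _,
          Set.image_mono hW₁s, ?_⟩
        have := (IH _ (hchoose_lt hs) g x₁ x₀ W₁ ((· * g⁻¹) '' W₀')).mp hle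
        rwa [image_mul_inv_image_mul] at this
      · intro h W₀ hW₀o hW₀ne hW₀s
        obtain ⟨W₁', hW₁o, hW₁ne, hW₁s, hle⟩ := h ((· * g) '' W₀)
          (isOpenMap_mul_right g _ hW₀o) (hW₀ne.image _) (Set.image_mono hW₀s)
        refine ⟨(· * g⁻¹) '' W₁', isOpenMap_mul_right g⁻¹ _ hW₁o, hW₁ne.image _,
          (by rw [← image_mul_image_mul_inv g V₁]; exact Set.image_mono hW₁s), ?_⟩
        apply (IH _ (hchoose_lt hs) g x₁ x₀ _ W₀).mpr
        rwa [image_mul_inv_image_mul]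
    · exact forall_congr' fun β => forall_congr' fun h1β => forall_congr' fun hβα =>
        IH β hβα g x₀ x₁ V₀ V₁

theorem stmt12 [Group G] [TopologicalSpace G] [IsTopologicalGroup G] [PolishSpace G]
    [TopologicalSpace X] [PolishSpace X] [MulAction G X] [ContinuousSMul G X]
    (B₀ : Set (Set G)) (hB : TopologicalSpace.IsTopologicalBasis B₀)
    (hBc : B₀.Countable) (hBne : ∀ b ∈ B₀, b.Nonempty)
    (hBtrans : ∀ U ∈ B₀, ∀ W ∈ B₀, closure U ⊆ W → ∀ g : G,
      ∃ V₁ ∈ B₀, ∃ V₂ ∈ B₀, (· * g) '' U ⊆ V₁ ∧ V₁ ⊆ V₂ ∧ V₂ ⊆ (· * g) '' W ∧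
        closure V₁ ⊆ V₂)
    (x y : X) (h : ∃ g : G, g • x = y) :
    hjorthRank B₀ x = hjorthRank B₀ y := by
  obtain ⟨g, rfl⟩ := h
  have key : ∀ (g : G) (x : X) (α : Ordinal),
      (∀ V₀ ∈ B₀, ∀ V₁ ∈ B₀, ∀ W₀ ∈ B₀, ∀ W₁ ∈ B₀, closure W₀ ⊆ V₀ → closure V₁ ⊆ W₁ →
        HLe α x V₀ x V₁ → HLe (α + 1) x W₀ x W₁) →
      (∀ V₀ ∈ B₀, ∀ V₁ ∈ B₀, ∀ W₀ ∈ B₀, ∀ W₁ ∈ B₀, closure W₀ ⊆ V₀ → closure V₁ ⊆ W₁ →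
        HLe α (g • x) V₀ (g • x) V₁ → HLe (α + 1) (g • x) W₀ (g • x) W₁) := by
    intro g x α hx V₀ hV₀ V₁ hV₁ W₀ hW₀ W₁ hW₁ hcl₀ hcl₁ hle
    rw [hle_smul] at hle
    obtain ⟨A₁, hA₁, A₂, hA₂, hWA, hA12, hAV, hclA⟩ := hBtrans W₀ hW₀ V₀ hV₀ hcl₀ g
    obtain ⟨B₁, hB₁, B₂, hB₂, hVB, hB12, hBW, hclB⟩ := hBtrans V₁ hV₁ W₁ hW₁ hcl₁ g
    have h1 : HLe α x A₂ x B₁ := hle_mono α hAV hVB hle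
    have h2 : HLe (α + 1) x A₁ x B₂ := hx A₂ hA₂ B₁ hB₁ A₁ hA₁ B₂ hB₂ hclA hclB h1
    have h3 : HLe (α + 1) x ((· * g) '' W₀) x ((· * g) '' W₁) := hle_mono _ hWA hBW h2
    exact (hle_smul _ g x x W₀ W₁).mpr h3
  unfold hjorthRank
  congr 1
  ext α
  simp only [Set.mem_setOf_eq]
  constructor
  · exact key g x α
  · intro h'
    have := key g⁻¹ (g • x) α h'
    simpa [inv_smul_smul] using this
end

section
/- Let G be a Polish group acting continuously on a Polish space X, B ⊆ X Borel, and x ∈ X. Then B·x = {g·x : g ∈ B} is Borel if and only if B·G_x is Borel, where G_x is the stabilizer of x. In particular, U·x is Borel for every open U ⊆ G. -/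
open Set

variable {G X : Type*}

section TransversalAux

open Metric Bornology Filter

open Classical in
/-- `Nat.find` with a default value `0` when no witness exists. -/
noncomputable def dNatFind {α : Type*} (P : ℕ → α → Prop) (g : α) : ℕ :=
  if h : ∃ n, P n g then Nat.find h else 0

open Classical in
lemma dNatFind_spec {α : Type*} {P : ℕ → α → Prop} {g : α} (h : ∃ n, P n g) :
    P (dNatFind P g) g := by
  rw [dNatFind, dif_pos h]; exact Nat.find_spec h

open Classical in
lemma dNatFind_congr {α : Type*} {P : ℕ → α → Prop} {g g' : α}
    (h : ∀ n, P n g ↔ P n g') : dNatFind P g = dNatFind P g' := by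
  unfold dNatFind
  by_cases he : ∃ n, P n g
  · have he' : ∃ n, P n g' := he.imp fun n hn => (h n).1 hn
    rw [dif_pos he, dif_pos he']
    exact le_antisymm (Nat.find_min' he ((h _).2 (Nat.find_spec he')))
      (Nat.find_min' he' ((h _).1 (Nat.find_spec he))) |>.symm ▸ rfl
  · have he' : ¬∃ n, P n g' := fun ⟨n, hn⟩ => he ⟨n, (h n).2 hn⟩
    rw [dif_neg he, dif_neg he']

open Classical in
lemma measurableSet_dNatFind {α : Type*} [MeasurableSpace α] {P : ℕ → α → Prop}
    (hP : ∀ n, MeasurableSet {g | P n g}) (m : ℕ) :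
    MeasurableSet {g | dNatFind P g = m} := by
  rcases Nat.eq_zero_or_pos m with rfl | hm
  · have heq : {g | dNatFind P g = 0} = {g | P 0 g} ∪ ⋂ n, {g | P n g}ᶜ := by
      ext g
      simp only [Set.mem_setOf_eq, Set.mem_union, Set.mem_iInter, Set.mem_compl_iff]
      constructor
      · intro h
        by_cases he : ∃ n, P n g
        · left
          rw [dNatFind, dif_pos he] at h
          exact h ▸ Nat.find_spec he
        · right; intro n hn; exact he ⟨n, hn⟩
      · rintro (h | h)
        · have he : ∃ n, P n g := ⟨0, h⟩
          rw [dNatFind, dif_pos he]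
          exact (Nat.find_eq_zero he).2 h
        · rw [dNatFind, dif_neg (fun ⟨n, hn⟩ => h n hn)]
    rw [heq]
    exact (hP 0).union (MeasurableSet.iInter fun n => (hP n).compl)
  · have heq : {g | dNatFind P g = m} =
        {g | P m g} ∩ ⋂ i, ⋂ _ : i < m, {g | P i g}ᶜ := by
      ext g
      simp only [Set.mem_setOf_eq, Set.mem_inter_iff, Set.mem_iInter, Set.mem_compl_iff]
      constructor
      · intro h
        by_cases he : ∃ n, P n g
        · rw [dNatFind, dif_pos he] at h
          subst h
          exact ⟨Nat.find_spec he, fun i hi => Nat.find_min he hi⟩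
        · rw [dNatFind, dif_neg he] at h; omega
      · rintro ⟨h1, h2⟩
        have he : ∃ n, P n g := ⟨m, h1⟩
        rw [dNatFind, dif_pos he]
        exact (Nat.find_eq_iff he).2 ⟨h1, h2⟩
    rw [heq]
    exact (hP m).inter (MeasurableSet.iInter fun i => MeasurableSet.iInter fun _ => (hP i).compl)

/-- The recursive choice of basic open sets used to build a Borel transversal. -/
noncomputable def trIdx {G : Type*} [PseudoMetricSpace G] (V R : ℕ → Set G) : ℕ → G → ℕ
  | 0 => dNatFind fun n g => Bornology.IsBounded (V n) ∧ Metric.diam (V n) < 1 ∧ g ∈ R n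
  | k + 1 => fun g =>
      dNatFind (fun n g' => Bornology.IsBounded (V n) ∧ Metric.diam (V n) < (1 / 2) ^ (k + 1) ∧
        closure (V n) ⊆ V (trIdx V R k g) ∧ g' ∈ R n) g

/-- A closed subgroup of a Polish group admits a Borel transversal for its left cosets. -/
theorem exists_borel_transversal {G : Type*} [Group G] [TopologicalSpace G] [IsTopologicalGroup G]
    [PolishSpace G] [MeasurableSpace G] [BorelSpace G] (H : Subgroup G)
    (hH : IsClosed (H : Set G)) :
    ∃ T : Set G, MeasurableSet T ∧ ∀ g : G, ∃! t, t ∈ T ∧ g⁻¹ * t ∈ H := by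
  letI := TopologicalSpace.upgradeIsCompletelyMetrizable G
  obtain ⟨b, hbc, -, hbb⟩ := TopologicalSpace.exists_countable_basis G
  have hbne : b.Nonempty := by
    obtain ⟨v, hv, -, -⟩ := hbb.exists_subset_of_mem_open (Set.mem_univ (1 : G)) isOpen_univ
    exact ⟨v, hv⟩
  obtain ⟨V, hVb⟩ := hbc.exists_eq_range hbne
  have hVopen : ∀ n, IsOpen (V n) := fun n =>
    hbb.isOpen (by rw [hVb]; exact Set.mem_range_self n)
  set R : ℕ → Set G := fun n => {g | ∃ p ∈ V n, g⁻¹ * p ∈ H} with hRdef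
  have hmemR : ∀ (g : G) (n : ℕ), g ∈ R n ↔ ∃ p ∈ V n, g⁻¹ * p ∈ H := fun g n => Iff.rfl
  have hRopen : ∀ n, IsOpen (R n) := by
    intro n
    have heq : R n = ⋃ h : H, (· * (h : G)) ⁻¹' V n := by
      ext g
      simp only [hmemR, Set.mem_iUnion, Set.mem_preimage]
      constructor
      · rintro ⟨p, hp, hgp⟩
        exact ⟨⟨g⁻¹ * p, hgp⟩, by simpa using hp⟩
      · rintro ⟨h, hg⟩
        exact ⟨g * h, hg, by simpa using h.2⟩
    rw [heq]
    exact isOpen_iUnion fun h => (hVopen n).preimage (continuous_mul_right _)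
  have hRinvkey : ∀ ⦃g g' : G⦄, g⁻¹ * g' ∈ H → ∀ n, g ∈ R n → g' ∈ R n := by
    rintro g g' hgg' n ⟨p, hp, hgp⟩
    refine ⟨p, hp, ?_⟩
    have : g'⁻¹ * p = (g⁻¹ * g')⁻¹ * (g⁻¹ * p) := by group
    rw [this]
    exact H.mul_mem (H.inv_mem hgg') hgp
  have hRinv : ∀ ⦃g g' : G⦄, g⁻¹ * g' ∈ H → ∀ n, (g ∈ R n ↔ g' ∈ R n) := by
    intro g g' h n
    have h' : g'⁻¹ * g ∈ H := by
      have := H.inv_mem h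
      rwa [mul_inv_rev, inv_inv] at this
    exact ⟨hRinvkey h n, hRinvkey h' n⟩
  have exists_step : ∀ (g : G) (W : Set G), IsOpen W → (∃ p ∈ W, g⁻¹ * p ∈ H) →
      ∀ ε : ℝ, 0 < ε →
      ∃ n, Bornology.IsBounded (V n) ∧ Metric.diam (V n) < ε ∧ closure (V n) ⊆ W ∧ g ∈ R n := by
    rintro g W hW ⟨p, hpW, hpH⟩ ε hε
    obtain ⟨r, hr, hball⟩ := Metric.isOpen_iff.1 hW p hpW
    set δ : ℝ := min (r / 3) (ε / 3) with hδdef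
    have hδ0 : 0 < δ := lt_min (by linarith) (by linarith)
    obtain ⟨v, hvb, hpv, hvsub⟩ :=
      hbb.exists_subset_of_mem_open (Metric.mem_ball_self hδ0) Metric.isOpen_ball
    rw [hVb] at hvb
    obtain ⟨n, rfl⟩ := hvb
    refine ⟨n, Metric.isBounded_ball.subset hvsub, ?_, ?_, ⟨p, hpv, hpH⟩⟩
    · calc Metric.diam (V n) ≤ Metric.diam (Metric.ball p δ) :=
            Metric.diam_mono hvsub Metric.isBounded_ball
        _ ≤ 2 * δ := Metric.diam_ball hδ0.le
        _ < ε := by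
            have := min_le_right (r / 3) (ε / 3)
            rw [← hδdef] at this; linarith
    · calc closure (V n) ⊆ closure (Metric.ball p δ) := closure_mono hvsub
        _ ⊆ Metric.closedBall p δ := Metric.closure_ball_subset_closedBall
        _ ⊆ Metric.ball p r := Metric.closedBall_subset_ball (by
            have := min_le_left (r / 3) (ε / 3)
            rw [← hδdef] at this; linarith)
        _ ⊆ W := hball
  set N : ℕ → G → ℕ := trIdx V R with hNdef
  have hNstep : ∀ (g : G) (k : ℕ),
      (Bornology.IsBounded (V (N k g)) ∧ Metric.diam (V (N k g)) < (1 / 2) ^ k ∧ g ∈ R (N k g))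
      ∧ (∀ j, k = j + 1 → closure (V (N k g)) ⊆ V (N j g)) := by
    intro g k
    induction k with
    | zero =>
      have hex : ∃ n, Bornology.IsBounded (V n) ∧ Metric.diam (V n) < 1 ∧ g ∈ R n := by
        obtain ⟨n, h1, h2, -, h4⟩ := exists_step g Set.univ isOpen_univ
          ⟨g, Set.mem_univ g, by simpa using H.one_mem⟩ 1 one_pos
        exact ⟨n, h1, h2, h4⟩
      have hspec := dNatFind_spec (P := fun n (g : G) =>
        Bornology.IsBounded (V n) ∧ Metric.diam (V n) < 1 ∧ g ∈ R n) hex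
      have h0 : N 0 g = dNatFind
          (fun n (g : G) => Bornology.IsBounded (V n) ∧ Metric.diam (V n) < 1 ∧ g ∈ R n) g := rfl
      refine ⟨?_, ?_⟩
      · rw [h0]
        simpa using hspec
      · intro j hj; omega
    | succ k ih =>
      obtain ⟨⟨hbk, hdk, hgk⟩, -⟩ := ih
      obtain ⟨p, hp, hpH⟩ := (hmemR g _).1 hgk
      have hex : ∃ n, Bornology.IsBounded (V n) ∧ Metric.diam (V n) < (1 / 2) ^ (k + 1) ∧
          closure (V n) ⊆ V (N k g) ∧ g ∈ R n :=
        exists_step g (V (N k g)) (hVopen _) ⟨p, hp, hpH⟩ _ (by positivity)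
      have hspec := dNatFind_spec (P := fun n (g' : G) =>
        Bornology.IsBounded (V n) ∧ Metric.diam (V n) < (1 / 2) ^ (k + 1) ∧
          closure (V n) ⊆ V (N k g) ∧ g' ∈ R n) hex
      have h1 : N (k + 1) g = dNatFind
          (fun n (g' : G) => Bornology.IsBounded (V n) ∧ Metric.diam (V n) < (1 / 2) ^ (k + 1) ∧
            closure (V n) ⊆ V (N k g) ∧ g' ∈ R n) g := rfl
      constructor
      · rw [h1]
        exact ⟨hspec.1, hspec.2.1, hspec.2.2.2⟩
      · intro j hj
        obtain rfl : j = k := by omega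
        rw [h1]
        exact hspec.2.2.1
  have hNinv : ∀ ⦃g g' : G⦄, g⁻¹ * g' ∈ H → ∀ k, N k g = N k g' := by
    intro g g' hgg' k
    induction k with
    | zero =>
      exact dNatFind_congr fun n =>
        and_congr_right fun _ => and_congr_right fun _ => hRinv hgg' n
    | succ k ih =>
      have h1 : N (k + 1) g = dNatFind
          (fun n (u : G) => Bornology.IsBounded (V n) ∧ Metric.diam (V n) < (1 / 2) ^ (k + 1) ∧
            closure (V n) ⊆ V (N k g) ∧ u ∈ R n) g := rfl
      have h2 : N (k + 1) g' = dNatFind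
          (fun n (u : G) => Bornology.IsBounded (V n) ∧ Metric.diam (V n) < (1 / 2) ^ (k + 1) ∧
            closure (V n) ⊆ V (N k g') ∧ u ∈ R n) g' := rfl
      rw [h1, h2, ← ih]
      exact dNatFind_congr fun n =>
        and_congr_right fun _ => and_congr_right fun _ => and_congr_right fun _ => hRinv hgg' n
  have hRmeas : ∀ n, MeasurableSet (R n) := fun n => (hRopen n).measurableSet
  have hstatic : ∀ (c : Prop) (n : ℕ), MeasurableSet {g : G | c ∧ g ∈ R n} := by
    intro c n
    by_cases h : c
    · have : {g : G | c ∧ g ∈ R n} = R n := by ext g; simp [h]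
      rw [this]; exact hRmeas n
    · have : {g : G | c ∧ g ∈ R n} = ∅ := by ext g; simp [h]
      rw [this]; exact MeasurableSet.empty
  have hNm : ∀ k m, MeasurableSet {g | N k g = m} := by
    intro k
    induction k with
    | zero =>
      intro m
      apply measurableSet_dNatFind
      intro n
      have : {g : G | Bornology.IsBounded (V n) ∧ Metric.diam (V n) < 1 ∧ g ∈ R n} =
          {g : G | (Bornology.IsBounded (V n) ∧ Metric.diam (V n) < 1) ∧ g ∈ R n} := by
        ext g; simp [and_assoc]
      rw [this]; exact hstatic _ n
    | succ k ih =>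
      intro m
      have hsplit : {g | N (k + 1) g = m} = ⋃ j, ({g | N k g = j} ∩
          {g | dNatFind (fun n (u : G) => Bornology.IsBounded (V n) ∧
            Metric.diam (V n) < (1 / 2) ^ (k + 1) ∧ closure (V n) ⊆ V j ∧ u ∈ R n) g = m}) := by
        ext g
        simp only [Set.mem_setOf_eq, Set.mem_iUnion, Set.mem_inter_iff]
        constructor
        · intro h
          exact ⟨N k g, rfl, h⟩
        · rintro ⟨j, hj, hF⟩
          have h1 : N (k + 1) g = dNatFind
              (fun n (u : G) => Bornology.IsBounded (V n) ∧ Metric.diam (V n) < (1 / 2) ^ (k + 1) ∧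
                closure (V n) ⊆ V (N k g) ∧ u ∈ R n) g := rfl
          rw [h1, hj]
          exact hF
      rw [hsplit]
      refine MeasurableSet.iUnion fun j => (ih j).inter (measurableSet_dNatFind ?_ m)
      intro n
      have : {g : G | Bornology.IsBounded (V n) ∧ Metric.diam (V n) < (1 / 2) ^ (k + 1) ∧
          closure (V n) ⊆ V j ∧ g ∈ R n} =
          {g : G | (Bornology.IsBounded (V n) ∧ Metric.diam (V n) < (1 / 2) ^ (k + 1) ∧
            closure (V n) ⊆ V j) ∧ g ∈ R n} := by
        ext g; simp [and_assoc]
      rw [this]; exact hstatic _ n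
  refine ⟨{g | ∀ k, g ∈ V (N k g)}, ?_, ?_⟩
  · have heq : {g : G | ∀ k, g ∈ V (N k g)} = ⋂ k, ⋃ m, ({g | N k g = m} ∩ V m) := by
      ext g
      simp only [Set.mem_setOf_eq, Set.mem_iInter, Set.mem_iUnion, Set.mem_inter_iff]
      refine forall_congr' fun k => ⟨fun h => ⟨N k g, rfl, h⟩, ?_⟩
      rintro ⟨m, hm, hg⟩
      rw [hm]; exact hg
    rw [heq]
    exact MeasurableSet.iInter fun k => MeasurableSet.iUnion fun m =>
      (hNm k m).inter (hVopen m).measurableSet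
  · intro g
    have hpts : ∀ k, ∃ p, p ∈ V (N k g) ∧ g⁻¹ * p ∈ H := by
      intro k
      obtain ⟨p, hp, hpH⟩ := (hmemR g _).1 (hNstep g k).1.2.2
      exact ⟨p, hp, hpH⟩
    choose p hp1 hp2 using hpts
    have hnest : ∀ k, closure (V (N (k + 1) g)) ⊆ V (N k g) := fun k =>
      (hNstep g (k + 1)).2 k rfl
    have hmono : ∀ k j, k ≤ j → V (N j g) ⊆ V (N k g) := by
      intro k j hkj
      induction j, hkj using Nat.le_induction with
      | base => exact subset_rfl
      | succ j hkj ih => exact (subset_closure.trans (hnest j)).trans ih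
    have hbnd : ∀ k, Bornology.IsBounded (V (N k g)) := fun k => (hNstep g k).1.1
    have hdiam : ∀ k, Metric.diam (V (N k g)) < (1 / 2) ^ k := fun k => (hNstep g k).1.2.1
    have hcauchy : CauchySeq p := by
      rw [Metric.cauchySeq_iff']
      intro ε hε
      obtain ⟨k, hk⟩ := exists_pow_lt_of_lt_one hε (by norm_num : (1 / 2 : ℝ) < 1)
      refine ⟨k, fun n hn => ?_⟩
      calc dist (p n) (p k) ≤ Metric.diam (V (N k g)) :=
            Metric.dist_le_diam_of_mem (hbnd k) (hmono k n hn (hp1 n)) (hp1 k)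
        _ < (1 / 2) ^ k := hdiam k
        _ < ε := hk
    obtain ⟨t, ht⟩ := cauchySeq_tendsto_of_complete hcauchy
    have htH : g⁻¹ * t ∈ H := by
      have htend : Tendsto (fun k => g⁻¹ * p k) atTop (nhds (g⁻¹ * t)) :=
        ((continuous_mul_left g⁻¹).tendsto t).comp ht
      exact hH.mem_of_tendsto htend (Filter.Eventually.of_forall hp2)
    have htV : ∀ k, t ∈ V (N k g) := by
      intro k
      refine hnest k (mem_closure_of_tendsto ht ?_)
      filter_upwards [Filter.eventually_ge_atTop (k + 1)] with j hj
      exact hmono (k + 1) j hj (hp1 j)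
    refine ⟨t, ⟨?_, htH⟩, ?_⟩
    · intro k
      rw [← hNinv htH k]
      exact htV k
    · rintro t' ⟨ht'T, ht'H⟩
      have h1 : ∀ k, t' ∈ V (N k g) := by
        intro k
        rw [hNinv ht'H k]
        exact ht'T k
      have h2 : ∀ k, dist t' t ≤ Metric.diam (V (N k g)) := fun k =>
        Metric.dist_le_diam_of_mem (hbnd k) (h1 k) (htV k)
      have hle : dist t' t ≤ 0 := by
        by_contra hlt
        push_neg at hlt
        obtain ⟨k, hk⟩ := exists_pow_lt_of_lt_one hlt (by norm_num : (1 / 2 : ℝ) < 1)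
        exact absurd ((h2 k).trans_lt (hdiam k)) (not_lt.2 hk.le)
      exact dist_le_zero.1 hle

end TransversalAux

open scoped Pointwise in
theorem stmt15 [Group G] [TopologicalSpace G] [IsTopologicalGroup G] [PolishSpace G]
    [TopologicalSpace X] [PolishSpace X] [MulAction G X] [ContinuousSMul G X]
    [MeasurableSpace G] [BorelSpace G] [MeasurableSpace X] [BorelSpace X]
    (B : Set G) (hB : MeasurableSet B) (x : X) :
    (MeasurableSet ((· • x) '' B) ↔
      MeasurableSet (B * (MulAction.stabilizer G x : Set G))) ∧
    ∀ U : Set G, IsOpen U → MeasurableSet ((· • x) '' U) := by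
  have hcont : Continuous fun g : G => g • x := continuous_id.smul continuous_const
  have hstabclosed : IsClosed ((MulAction.stabilizer G x : Subgroup G) : Set G) := by
    have heq : ((MulAction.stabilizer G x : Subgroup G) : Set G) =
        (fun g : G => g • x) ⁻¹' {x} := by
      ext g; simp [MulAction.mem_stabilizer_iff]
    rw [heq]
    exact IsClosed.preimage hcont isClosed_singleton
  obtain ⟨T, hTmeas, hTuniq⟩ := exists_borel_transversal (MulAction.stabilizer G x) hstabclosed
  have key : ∀ S : Set G, MeasurableSet S →
      (∀ g ∈ S, ∀ h ∈ MulAction.stabilizer G x, g * h ∈ S) →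
      MeasurableSet ((· • x) '' S) := by
    intro S hS hsat
    have himg : (· • x) '' S = (· • x) '' (S ∩ T) := by
      ext y
      constructor
      · rintro ⟨g, hg, rfl⟩
        obtain ⟨t, ⟨htT, htH⟩, -⟩ := hTuniq g
        refine ⟨t, ⟨?_, htT⟩, ?_⟩
        · have het : t = g * (g⁻¹ * t) := (mul_inv_cancel_left g t).symm
          rw [het]
          exact hsat g hg _ htH
        · show t • x = g • x
          rw [show t = g * (g⁻¹ * t) from (mul_inv_cancel_left g t).symm, mul_smul,
            MulAction.mem_stabilizer_iff.1 htH]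
      · rintro ⟨t, ⟨htS, -⟩, rfl⟩
        exact ⟨t, htS, rfl⟩
    rw [himg]
    have hinj : Set.InjOn (· • x) (S ∩ T) := by
      rintro t ⟨-, htT⟩ t' ⟨-, ht'T⟩ hxx
      have hxx' : t • x = t' • x := hxx
      have h1 : t⁻¹ * t' ∈ MulAction.stabilizer G x := by
        rw [MulAction.mem_stabilizer_iff, mul_smul, ← hxx', inv_smul_smul]
      obtain ⟨u, -, hu⟩ := hTuniq t
      have e1 : t' = u := hu t' ⟨ht'T, h1⟩
      have e2 : t = u := hu t ⟨htT, by simp⟩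
      rw [e1, e2]
    exact (hS.inter hTmeas).image_of_continuousOn_injOn hcont.continuousOn hinj
  have hsatur : ∀ S : Set G, ∀ g ∈ S * (MulAction.stabilizer G x : Set G),
      ∀ h ∈ MulAction.stabilizer G x, g * h ∈ S * (MulAction.stabilizer G x : Set G) := by
    intro S g hg h hh
    rw [Set.mem_mul] at hg ⊢
    obtain ⟨b, hb, s, hs, rfl⟩ := hg
    exact ⟨b, hb, s * h, mul_mem hs hh, (mul_assoc _ _ _).symm⟩
  have himgsat : ∀ S : Set G,
      (· • x) '' (S * (MulAction.stabilizer G x : Set G)) = (· • x) '' S := by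
    intro S
    ext y
    simp only [Set.mem_image]
    constructor
    · rintro ⟨g, hg, rfl⟩
      rw [Set.mem_mul] at hg
      obtain ⟨b, hb, s, hs, rfl⟩ := hg
      refine ⟨b, hb, ?_⟩
      rw [mul_smul, MulAction.mem_stabilizer_iff.1 hs]
    · rintro ⟨b, hb, rfl⟩
      refine ⟨b, ?_, rfl⟩
      rw [Set.mem_mul]
      exact ⟨b, hb, 1, (MulAction.stabilizer G x).one_mem, mul_one b⟩
  have hard : ∀ S : Set G, MeasurableSet (S * (MulAction.stabilizer G x : Set G)) →
      MeasurableSet ((· • x) '' S) := by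
    intro S hSH
    rw [← himgsat S]
    exact key _ hSH (hsatur S)
  constructor
  · constructor
    · intro himg
      have heq : B * (MulAction.stabilizer G x : Set G) =
          (fun g : G => g • x) ⁻¹' ((· • x) '' B) := by
        ext g
        simp only [Set.mem_preimage, Set.mem_image]
        constructor
        · intro hg
          rw [Set.mem_mul] at hg
          obtain ⟨b, hb, s, hs, rfl⟩ := hg
          refine ⟨b, hb, ?_⟩
          rw [mul_smul, MulAction.mem_stabilizer_iff.1 hs]
        · rintro ⟨b, hb, hbg⟩
          have hbg' : b • x = g • x := hbg
          rw [Set.mem_mul]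
          refine ⟨b, hb, b⁻¹ * g, ?_, mul_inv_cancel_left b g⟩
          rw [SetLike.mem_coe, MulAction.mem_stabilizer_iff, mul_smul, ← hbg', inv_smul_smul]
      rw [heq]
      exact himg.preimage hcont.measurable
    · exact hard B
  · intro U hU
    exact hard U (hU.mul_right).measurableSet
end
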